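/- arXiv:0906.5051 — 10 statements merged into one kernel-verified Lean document; each statement's English description precedes it below -/
import Mathlib

section
/- Let 0 < s_1 ≤ s_2 ≤ … ≤ s_n be item sizes and let f : ℝ → ℝ be non-decreasing and concave on [0,∞) with f(0) = 0. Then the FNFI fractional packing minimizes cost among all fractional packings: for every fractional packing x into m' bins with fractional item counts n_1,…,n_{m'}, one has Σ_{b=1}^{m} f(N_b) ≤ Σ_{b=1}^{m'} f(n_b), where N_1,…,N_m are the fractional item counts of the FNFI packing. -/
open Finset

/-- Prefix sums of the item sizes: `prefixSum s j = s 0 + … + s (j-1)`. -/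
def prefixSum (s : ℕ → ℝ) (j : ℕ) : ℝ := ∑ i ∈ Finset.range j, s i

/-- The fractional number of items placed by FNFI into (0-indexed) bin `b`:
bin `b` receives, for each item `i`, the part corresponding to the interval
`[prefixSum s i, prefixSum s (i+1)] ∩ [b, b+1]`, counted as a fraction of `s i`. -/
noncomputable def fnfiCount (s : ℕ → ℝ) (n b : ℕ) : ℝ :=
  ∑ i ∈ Finset.range n,
    max 0 (min (prefixSum s (i + 1)) ((b : ℝ) + 1) - max (prefixSum s i) (b : ℝ)) / s i


lemma piece_eq (A B b : ℝ) (h0 : 0 ≤ A) (hAB : A ≤ B) (hb : 0 ≤ b) :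
    max 0 (min B (b+1) - max A b) =
      (min B (b+1) - min A (b+1)) - (min B b - min A b) := by
  simp only [min_def, max_def]
  split_ifs <;> linarith

lemma abel_bound (G d : ℕ → ℝ) (hG : Monotone G) :
    ∀ K, (∀ k ≤ K, ∑ b ∈ range k, d b ≤ 0) →
      G K * (∑ b ∈ range K, d b) ≤ ∑ b ∈ range K, G b * d b := by
  intro K
  induction K with
  | zero => simp
  | succ K ih =>
    intro hP
    have h1 := ih (fun k hk => hP k (hk.trans (Nat.le_succ K)))
    have hPK := hP K (Nat.le_succ K)
    have hPK1 := hP (K+1) le_rfl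
    rw [Finset.sum_range_succ] at hPK1
    rw [Finset.sum_range_succ, Finset.sum_range_succ]
    nlinarith [hG (Nat.le_succ K)]


noncomputable def sg (f : ℝ → ℝ) (a : ℝ) : ℝ :=
  sSup ((fun x => (f x - f a) / (x - a)) '' Set.Ioi a)

variable {f : ℝ → ℝ}

lemma sg_bdd (hconc : ConcaveOn ℝ (Set.Ici (0:ℝ)) f) {a : ℝ} (ha : 0 < a) :
    BddAbove ((fun x => (f x - f a) / (x - a)) '' Set.Ioi a) := by
  refine ⟨(f a - f (a/2)) / (a - a/2), ?_⟩
  rintro r ⟨z, hz, rfl⟩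
  exact hconc.slope_anti_adjacent (by positivity : (0:ℝ) ≤ a/2)
    (le_of_lt (lt_trans ha hz)) (half_lt_self ha) hz

lemma sg_nonempty {a : ℝ} :
    ((fun x => (f x - f a) / (x - a)) '' Set.Ioi a).Nonempty :=
  ⟨_, ⟨a + 1, by simp, rfl⟩⟩

lemma sg_support (hconc : ConcaveOn ℝ (Set.Ici (0:ℝ)) f) {a : ℝ} (ha : 0 < a)
    {w : ℝ} (hw : 0 ≤ w) : f w ≤ f a + sg f a * (w - a) := by
  rcases lt_trichotomy w a with h | h | h
  · have hle : sg f a ≤ (f a - f w) / (a - w) := by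
      apply csSup_le sg_nonempty
      rintro r ⟨z, hz, rfl⟩
      exact hconc.slope_anti_adjacent hw (le_of_lt (lt_trans ha hz)) h hz
    have haw : 0 < a - w := by linarith
    have := (div_le_div_iff₀ haw haw).mp (le_refl ((f a - f w) / (a - w)))
    have h2 : sg f a * (a - w) ≤ f a - f w := by
      have := mul_le_mul_of_nonneg_right hle haw.le
      rwa [div_mul_cancel₀ _ haw.ne'] at this
    linarith
  · subst h; simp
  · have hle : (f w - f a) / (w - a) ≤ sg f a :=
      le_csSup (sg_bdd hconc ha) ⟨w, h, rfl⟩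
    have hwa : 0 < w - a := by linarith
    have h2 : f w - f a ≤ sg f a * (w - a) := by
      have := mul_le_mul_of_nonneg_right hle hwa.le
      rwa [div_mul_cancel₀ _ hwa.ne'] at this
    linarith

lemma sg_anti (hconc : ConcaveOn ℝ (Set.Ici (0:ℝ)) f) {a a' : ℝ} (ha : 0 < a)
    (haa' : a ≤ a') : sg f a' ≤ sg f a := by
  rcases eq_or_lt_of_le haa' with rfl | h
  · exact le_refl _
  · apply csSup_le sg_nonempty
    rintro r ⟨z, hz, rfl⟩
    calc (f z - f a') / (z - a') ≤ (f a' - f a) / (a' - a) :=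
          hconc.slope_anti_adjacent ha.le (le_of_lt (lt_trans (lt_trans ha h) hz)) h hz
      _ ≤ sg f a := le_csSup (sg_bdd hconc ha) ⟨a', h, rfl⟩

lemma hlp (f : ℝ → ℝ) (hf0 : f 0 = 0) (hconc : ConcaveOn ℝ (Set.Ici (0:ℝ)) f)
    (M : ℕ) (u v : ℕ → ℝ) (hu0 : ∀ b, 0 ≤ u b) (hv0 : ∀ b, 0 ≤ v b)
    (hva : Antitone v)
    (hpre : ∀ k ≤ M, ∑ b ∈ range k, v b ≤ ∑ b ∈ range k, u b)
    (htot : ∑ b ∈ range M, u b = ∑ b ∈ range M, v b) :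
    ∑ b ∈ range M, f (u b) ≤ ∑ b ∈ range M, f (v b) := by
  classical
  have hPex : ∃ k, k = M ∨ v k ≤ 0 := ⟨M, Or.inl rfl⟩
  set K := Nat.find hPex with hKdef
  have hKM : K ≤ M := Nat.find_min' hPex (Or.inl rfl)
  have hvpos : ∀ b < K, 0 < v b := by
    intro b hb
    have := Nat.find_min hPex hb
    push_neg at this
    exact this.2
  have hvtail : ∀ b, K ≤ b → b < M → v b = 0 := by
    intro b hKb hbM
    rcases Nat.find_spec hPex with h | h
    · omega
    · exact le_antisymm (le_trans (hva hKb) h) (hv0 b)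
  have hsplit : ∀ w : ℕ → ℝ,
      ∑ b ∈ range K, w b + ∑ b ∈ Ico K M, w b = ∑ b ∈ range M, w b :=
    fun w => Finset.sum_range_add_sum_Ico w hKM
  have hvt : ∑ b ∈ Ico K M, v b = 0 :=
    Finset.sum_eq_zero fun b hb => hvtail b (mem_Ico.1 hb).1 (mem_Ico.1 hb).2
  have hut0 : ∑ b ∈ Ico K M, u b ≤ 0 := by
    have h1 := hpre K hKM
    have h2 := hsplit u
    have h3 := hsplit v
    linarith
  have hut : ∀ b ∈ Finset.Ico K M, u b = 0 :=
    (Finset.sum_eq_zero_iff_of_nonneg (fun b _ => hu0 b)).1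
      (le_antisymm hut0 (Finset.sum_nonneg fun b _ => hu0 b))
  have hredu : ∑ b ∈ range M, f (u b) = ∑ b ∈ range K, f (u b) := by
    rw [← hsplit (fun b => f (u b))]
    have : ∑ b ∈ Ico K M, f (u b) = 0 :=
      Finset.sum_eq_zero fun b hb => by rw [hut b hb, hf0]
    rw [this, add_zero]
  have hredv : ∑ b ∈ range M, f (v b) = ∑ b ∈ range K, f (v b) := by
    rw [← hsplit (fun b => f (v b))]
    have : ∑ b ∈ Ico K M, f (v b) = 0 :=
      Finset.sum_eq_zero fun b hb => by
        rw [hvtail b (mem_Ico.1 hb).1 (mem_Ico.1 hb).2, hf0]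
    rw [this, add_zero]
  rw [hredu, hredv]
  rcases Nat.eq_zero_or_pos K with h0 | hKpos
  · simp [h0]
  set G : ℕ → ℝ := fun b => sg f (v (min b (K-1))) with hGdef
  have hGmono : Monotone G := by
    intro b b' hbb'
    exact sg_anti hconc (hvpos _ (by omega)) (hva (min_le_min hbb' le_rfl))
  have hpt : ∀ b < K, f (u b) ≤ f (v b) + G b * (u b - v b) := by
    intro b hb
    have hmin : min b (K-1) = b := min_eq_left (by omega)
    have := sg_support hconc (hvpos b hb) (hu0 b)
    rw [hGdef]
    simpa [hmin] using this
  have hd : ∀ k ≤ K, ∑ b ∈ range k, (v b - u b) ≤ 0 := by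
    intro k hk
    have := hpre k (hk.trans hKM)
    rw [Finset.sum_sub_distrib]
    linarith
  have hdK : ∑ b ∈ range K, (v b - u b) = 0 := by
    have h2 := hsplit u
    have h3 := hsplit v
    have hu' : ∑ b ∈ Ico K M, u b = 0 := Finset.sum_eq_zero hut
    rw [Finset.sum_sub_distrib]
    linarith
  have habel := abel_bound G (fun b => v b - u b) hGmono K hd
  rw [hdK, mul_zero] at habel
  have habel' : (0:ℝ) ≤ ∑ b ∈ range K, G b * (v b - u b) := habel
  calc ∑ b ∈ range K, f (u b)
      ≤ ∑ b ∈ range K, (f (v b) + G b * (u b - v b)) :=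
        Finset.sum_le_sum fun b hb => hpt b (mem_range.1 hb)
    _ = ∑ b ∈ range K, f (v b) - ∑ b ∈ range K, G b * (v b - u b) := by
        rw [Finset.sum_add_distrib]
        have h9 : ∑ x ∈ range K, G x * (u x - v x) = -∑ b ∈ range K, G b * (v b - u b) := by
          rw [← Finset.sum_neg_distrib]
          exact Finset.sum_congr rfl fun b _ => by ring
        rw [h9]; ring
    _ ≤ ∑ b ∈ range K, f (v b) := by linarith [habel']

lemma prefixSum_nonneg (s : ℕ → ℝ) (n : ℕ) (hpos : ∀ i < n, 0 < s i)
    {j : ℕ} (hj : j ≤ n) : 0 ≤ prefixSum s j :=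
  Finset.sum_nonneg fun i hi => (hpos i (lt_of_lt_of_le (mem_range.1 hi) hj)).le

lemma prefixSum_mono (s : ℕ → ℝ) (n : ℕ) (hpos : ∀ i < n, 0 < s i)
    {j k : ℕ} (hjk : j ≤ k) (hk : k ≤ n) : prefixSum s j ≤ prefixSum s k := by
  apply Finset.sum_le_sum_of_subset_of_nonneg (Finset.range_subset_range.2 hjk)
  intro i hi _
  exact (hpos i (lt_of_lt_of_le (mem_range.1 hi) hk)).le

lemma fnfi_prefix (s : ℕ → ℝ) (n : ℕ) (hpos : ∀ i < n, 0 < s i) (k : ℕ) :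
    ∑ b ∈ range k, fnfiCount s n b
      = ∑ i ∈ range n, (min (prefixSum s (i+1)) (k:ℝ) - min (prefixSum s i) (k:ℝ)) / s i := by
  unfold fnfiCount
  rw [Finset.sum_comm]
  refine Finset.sum_congr rfl fun i hi => ?_
  rw [mem_range] at hi
  rw [← Finset.sum_div]
  congr 1
  have h0 : 0 ≤ prefixSum s i := prefixSum_nonneg s n hpos hi.le
  have hAB : prefixSum s i ≤ prefixSum s (i+1) := prefixSum_mono s n hpos (Nat.le_succ i) hi
  have hstep : ∀ b ∈ range k,
      max 0 (min (prefixSum s (i+1)) ((b:ℝ) + 1) - max (prefixSum s i) (b:ℝ))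
        = (fun t : ℕ => min (prefixSum s (i+1)) (t:ℝ) - min (prefixSum s i) (t:ℝ)) (b+1)
          - (fun t : ℕ => min (prefixSum s (i+1)) (t:ℝ) - min (prefixSum s i) (t:ℝ)) b := by
    intro b _
    have := piece_eq (prefixSum s i) (prefixSum s (i+1)) (b:ℝ) h0 hAB (Nat.cast_nonneg b)
    push_cast
    exact this
  rw [Finset.sum_congr rfl hstep,
    Finset.sum_range_sub (fun t : ℕ => min (prefixSum s (i+1)) (t:ℝ) - min (prefixSum s i) (t:ℝ)) k]
  simp [min_eq_right h0, min_eq_right (h0.trans hAB)]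

lemma greedy_opt (s : ℕ → ℝ) (n : ℕ) (hpos : ∀ i < n, 0 < s i)
    (hsorted : ∀ i j, i ≤ j → j < n → s i ≤ s j)
    (k : ℕ) (y : ℕ → ℝ) (hy0 : ∀ i < n, 0 ≤ y i) (hy1 : ∀ i < n, y i ≤ 1)
    (hys : ∑ i ∈ range n, y i * s i ≤ (k:ℝ)) :
    ∑ i ∈ range n, y i ≤
      ∑ i ∈ range n, (min (prefixSum s (i+1)) (k:ℝ) - min (prefixSum s i) (k:ℝ)) / s i := by
  classical
  set z : ℕ → ℝ := fun i => (min (prefixSum s (i+1)) (k:ℝ) - min (prefixSum s i) (k:ℝ)) / s i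
    with hzdef
  have hz1 : ∀ i < n, prefixSum s (i+1) ≤ (k:ℝ) → z i = 1 := by
    intro i hi h1
    have h2 : prefixSum s i ≤ (k:ℝ) :=
      le_trans (prefixSum_mono s n hpos (Nat.le_succ i) hi) h1
    have hstep : prefixSum s (i+1) = prefixSum s i + s i := Finset.sum_range_succ s i
    rw [hzdef]
    simp only [min_eq_left h1, min_eq_left h2]
    rw [hstep, add_sub_cancel_left]
    exact div_self (hpos i hi).ne'
  rcases le_or_gt (prefixSum s n) (k:ℝ) with hTk | hTk
  · refine Finset.sum_le_sum fun i hi => ?_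
    rw [mem_range] at hi
    have hz := hz1 i hi (le_trans (prefixSum_mono s n hpos hi le_rfl) hTk)
    exact le_trans (hy1 i hi) (le_of_eq hz.symm)
  · have hn : 0 < n := by
      rcases Nat.eq_zero_or_pos n with h | h
      · subst h
        simp [prefixSum] at hTk
        exact absurd hTk (not_lt.2 (Nat.cast_nonneg k))
      · exact h
    have hex : ∃ i, (k:ℝ) < prefixSum s (i+1) := by
      refine ⟨n-1, ?_⟩
      have h9 : n - 1 + 1 = n := by omega
      rw [h9]; exact hTk
    set j := Nat.find hex with hjdef
    have hjn : j < n := by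
      have := Nat.find_min' hex hex.choose_spec
      have h1 : j ≤ n - 1 := Nat.find_min' hex (by
        have h9 : n - 1 + 1 = n := by omega
        rw [h9]; exact hTk)
      omega
    have hsj : 0 < s j := hpos j hjn
    have hjlt : ∀ i < j, prefixSum s (i+1) ≤ (k:ℝ) := fun i hi =>
      not_lt.1 (Nat.find_min hex hi)
    have hzi1 : ∀ i < j, z i = 1 := fun i hi =>
      hz1 i (lt_trans hi hjn) (hjlt i hi)
    have hzi0 : ∀ i, j < i → i < n → z i = 0 := by
      intro i hji hin
      have hS : (k:ℝ) ≤ prefixSum s i :=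
        le_trans (Nat.find_spec hex).le (prefixSum_mono s n hpos (by omega) hin.le)
      have hS' : (k:ℝ) ≤ prefixSum s (i+1) :=
        le_trans hS (prefixSum_mono s n hpos (Nat.le_succ i) hin)
      rw [hzdef]
      simp [min_eq_right hS, min_eq_right hS']
    have key : ∀ i ∈ range n, (z i - y i) * s i ≤ (z i - y i) * s j := by
      intro i hi
      rw [mem_range] at hi
      rcases lt_trichotomy i j with h | h | h
      · have h1 : 0 ≤ z i - y i := by rw [hzi1 i h]; linarith [hy1 i hi]
        exact mul_le_mul_of_nonneg_left (hsorted i j h.le hjn) h1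
      · subst h; exact le_rfl
      · have h1 : z i - y i ≤ 0 := by rw [hzi0 i h hi]; linarith [hy0 i hi]
        exact mul_le_mul_of_nonpos_left (hsorted j i h.le hi) h1
    have sumz : ∑ i ∈ range n, z i * s i = (k:ℝ) := by
      have he : ∀ i ∈ range n, z i * s i
          = (fun t : ℕ => min (prefixSum s t) (k:ℝ)) (i+1)
            - (fun t : ℕ => min (prefixSum s t) (k:ℝ)) i := by
        intro i hi
        rw [mem_range] at hi
        rw [hzdef]
        exact div_mul_cancel₀ _ (hpos i hi).ne'
      rw [Finset.sum_congr rfl he,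
        Finset.sum_range_sub (fun t : ℕ => min (prefixSum s t) (k:ℝ)) n]
      have h1 : prefixSum s 0 = 0 := by simp [prefixSum]
      rw [min_eq_right hTk.le, h1, min_eq_left (Nat.cast_nonneg k), sub_zero]
    have big : (k:ℝ) - ∑ i ∈ range n, y i * s i ≤ (∑ i ∈ range n, (z i - y i)) * s j := by
      rw [Finset.sum_mul]
      calc (k:ℝ) - ∑ i ∈ range n, y i * s i
          = ∑ i ∈ range n, (z i - y i) * s i := by
            rw [← sumz, ← Finset.sum_sub_distrib]
            exact Finset.sum_congr rfl fun i _ => (sub_mul _ _ _).symm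
        _ ≤ ∑ i ∈ range n, (z i - y i) * s j := Finset.sum_le_sum key
    have h2 : (0:ℝ) ≤ (∑ i ∈ range n, (z i - y i)) * s j := le_trans (by linarith) big
    have h3 : (0:ℝ) ≤ ∑ i ∈ range n, (z i - y i) := by
      have := div_nonneg h2 hsj.le
      rwa [mul_div_cancel_right₀ _ hsj.ne'] at this
    rw [Finset.sum_sub_distrib] at h3
    linarith

/-- FNFI minimizes the cost among all fractional packings, for any non-decreasing
concave cost function `f` on `[0,∞)` with `f 0 = 0`. -/
theorem fnfi_minimizes_fractional (n : ℕ) (s : ℕ → ℝ)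
    (hpos : ∀ i < n, 0 < s i)
    (hsorted : ∀ i j, i ≤ j → j < n → s i ≤ s j)
    (f : ℝ → ℝ) (hf0 : f 0 = 0)
    (hmono : MonotoneOn f (Set.Ici (0 : ℝ)))
    (hconc : ConcaveOn ℝ (Set.Ici (0 : ℝ)) f)
    (m' : ℕ) (x : Fin m' → Fin n → ℝ)
    (hx0 : ∀ b i, 0 ≤ x b i)
    (hx1 : ∀ i, ∑ b, x b i = 1)
    (hxs : ∀ b, ∑ i, x b i * s (i : ℕ) ≤ 1) :
    ∑ b ∈ Finset.range ⌈prefixSum s n⌉₊, f (fnfiCount s n b) ≤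
      ∑ b : Fin m', f (∑ i, x b i) := by
  classical
  set T := prefixSum s n with hTdef
  have hTm' : T ≤ (m' : ℝ) := by
    have h1 : ∑ b : Fin m', ∑ i : Fin n, x b i * s (i:ℕ) = T := by
      rw [Finset.sum_comm]
      have he : ∀ i : Fin n, ∑ b : Fin m', x b i * s (i:ℕ) = s (i:ℕ) := by
        intro i; rw [← Finset.sum_mul, hx1 i, one_mul]
      rw [Finset.sum_congr rfl (fun i _ => he i), hTdef]
      exact Fin.sum_univ_eq_sum_range s n
    have h2 : ∑ b : Fin m', ∑ i : Fin n, x b i * s (i:ℕ) ≤ (m' : ℝ) := by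
      calc ∑ b : Fin m', ∑ i : Fin n, x b i * s (i:ℕ) ≤ ∑ _b : Fin m', (1:ℝ) :=
            Finset.sum_le_sum fun b _ => hxs b
        _ = (m' : ℝ) := by simp
    linarith
  have hmm' : ⌈T⌉₊ ≤ m' := Nat.ceil_le.2 hTm'
  set u : ℕ → ℝ := fun b => fnfiCount s n b with hudef
  have hu0 : ∀ b, 0 ≤ u b := by
    intro b
    apply Finset.sum_nonneg
    intro i hi
    exact div_nonneg (le_max_left _ _) (hpos i (mem_range.1 hi)).le
  have hStop : ∀ i ≤ n, prefixSum s i ≤ T := fun i hi => prefixSum_mono s n hpos hi le_rfl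
  have hutail : ∀ b, ⌈T⌉₊ ≤ b → u b = 0 := by
    intro b hb
    apply Finset.sum_eq_zero
    intro i hi
    rw [mem_range] at hi
    have h1 : min (prefixSum s (i+1)) ((b:ℝ)+1) ≤ (b:ℝ) := by
      have h4 := hStop (i+1) hi
      have h2 : T ≤ (⌈T⌉₊ : ℝ) := Nat.le_ceil T
      have h3 : ((⌈T⌉₊:ℕ):ℝ) ≤ (b:ℝ) := Nat.cast_le.2 hb
      calc min (prefixSum s (i+1)) ((b:ℝ)+1) ≤ prefixSum s (i+1) := min_le_left _ _
        _ ≤ (b:ℝ) := by linarith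
    have h2 : (b:ℝ) ≤ max (prefixSum s i) (b:ℝ) := le_max_right _ _
    have h3 : min (prefixSum s (i+1)) ((b:ℝ)+1) - max (prefixSum s i) (b:ℝ) ≤ 0 := by linarith
    rw [max_eq_left h3, zero_div]
  have hLHS : ∑ b ∈ Finset.range ⌈T⌉₊, f (fnfiCount s n b) = ∑ b ∈ Finset.range m', f (u b) := by
    rw [← Finset.sum_range_add_sum_Ico (fun b => f (u b)) hmm']
    have h5 : ∑ b ∈ Finset.Ico ⌈T⌉₊ m', f (u b) = 0 :=
      Finset.sum_eq_zero fun b hb => by rw [hutail b (Finset.mem_Ico.1 hb).1, hf0]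
    rw [h5, add_zero]
  set nb : Fin m' → ℝ := fun b => ∑ i, x b i with hnbdef
  have hnb0 : ∀ b, 0 ≤ nb b := fun b => Finset.sum_nonneg fun i _ => hx0 b i
  set σ := Tuple.sort (fun b => -nb b) with hσdef
  have hσmono : Monotone ((fun b => -nb b) ∘ σ) := Tuple.monotone_sort _
  set v : ℕ → ℝ := fun b => if h : b < m' then nb (σ ⟨b, h⟩) else 0 with hvdef
  have hv0 : ∀ b, 0 ≤ v b := by
    intro b; simp only [hvdef]; split
    · exact hnb0 _
    · exact le_rfl
  have hva : Antitone v := by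
    intro b b' hbb'
    by_cases hb' : b' < m'
    · have hb : b < m' := lt_of_le_of_lt hbb' hb'
      have h1 := hσmono (show (⟨b, hb⟩ : Fin m') ≤ ⟨b', hb'⟩ from hbb')
      simp only [Function.comp_apply, neg_le_neg_iff] at h1
      simp only [hvdef]
      rw [dif_pos hb, dif_pos hb']
      exact h1
    · simp only [hvdef]
      rw [dif_neg hb']
      exact hv0 b
  have hvfin : ∀ b : Fin m', v (b:ℕ) = nb (σ b) := by
    intro b
    simp only [hvdef]
    rw [dif_pos b.isLt]
  have hRHS : ∑ b ∈ Finset.range m', f (v b) = ∑ b : Fin m', f (nb b) := by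
    rw [← Fin.sum_univ_eq_sum_range (fun b => f (v b)) m']
    calc ∑ b : Fin m', f (v (b:ℕ)) = ∑ b : Fin m', f (nb (σ b)) :=
          Finset.sum_congr rfl fun b _ => by rw [hvfin b]
      _ = ∑ b : Fin m', f (nb b) := Equiv.sum_comp σ (fun b => f (nb b))
  have hone : ∀ i ∈ range n,
      (min (prefixSum s (i+1)) ((m':ℕ):ℝ) - min (prefixSum s i) ((m':ℕ):ℝ)) / s i = 1 := by
    intro i hi
    rw [mem_range] at hi
    have h1 : prefixSum s (i+1) ≤ ((m':ℕ):ℝ) := le_trans (hStop (i+1) hi) hTm'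
    have h2 : prefixSum s i ≤ ((m':ℕ):ℝ) := le_trans (hStop i hi.le) hTm'
    have hstep : prefixSum s (i+1) = prefixSum s i + s i := Finset.sum_range_succ s i
    rw [min_eq_left h1, min_eq_left h2, hstep, add_sub_cancel_left]
    exact div_self (hpos i hi).ne'
  have htotu : ∑ b ∈ Finset.range m', u b = (n:ℝ) := by
    simp only [hudef]
    rw [fnfi_prefix s n hpos m', Finset.sum_congr rfl hone, Finset.sum_const, Finset.card_range]
    simp
  have htotv : ∑ b ∈ Finset.range m', v b = (n:ℝ) := by
    rw [← Fin.sum_univ_eq_sum_range (fun b => v b) m']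
    calc ∑ b : Fin m', v (b:ℕ) = ∑ b : Fin m', nb (σ b) :=
          Finset.sum_congr rfl fun b _ => hvfin b
      _ = ∑ b : Fin m', nb b := Equiv.sum_comp σ nb
      _ = ∑ b : Fin m', ∑ i : Fin n, x b i := rfl
      _ = ∑ i : Fin n, ∑ b : Fin m', x b i := Finset.sum_comm
      _ = ∑ _i : Fin n, (1:ℝ) := Finset.sum_congr rfl fun i _ => hx1 i
      _ = (n:ℝ) := by simp
  have hpre : ∀ k ≤ m', ∑ b ∈ Finset.range k, v b ≤ ∑ b ∈ Finset.range k, u b := by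
    intro k hk
    set A : Finset (Fin m') :=
      Finset.attachFin (Finset.range k) (fun c hc => lt_of_lt_of_le (mem_range.1 hc) hk) with hA
    set B : Finset (Fin m') := Finset.image σ A with hB
    have hcardA : A.card = k := by
      rw [hA, Finset.card_attachFin, Finset.card_range]
    have hcardB : B.card = k := by
      rw [hB, Finset.card_image_of_injective _ σ.injective, hcardA]
    have hsum1 : ∑ b ∈ Finset.range k, v b = ∑ c ∈ B, nb c := by
      rw [hB, Finset.sum_image (fun a _ b _ h => σ.injective h)]
      refine (Finset.sum_bij' (fun (c : Fin m') (_ : c ∈ A) => (c : ℕ))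
        (fun (b : ℕ) (hb : b ∈ Finset.range k) =>
          (⟨b, lt_of_lt_of_le (mem_range.1 hb) hk⟩ : Fin m'))
        ?_ ?_ ?_ ?_ ?_).symm
      · intro c hc
        rw [hA, Finset.mem_attachFin] at hc
        exact hc
      · intro b hb
        rw [hA, Finset.mem_attachFin]
        exact hb
      · intro c hc
        exact Fin.eta c c.isLt
      · intro b hb
        rfl
      · intro c hc
        exact (hvfin c).symm
    set y : ℕ → ℝ := fun i => if h : i < n then ∑ c ∈ B, x c ⟨i, h⟩ else 0 with hy
    have hyfin : ∀ i : Fin n, y (i:ℕ) = ∑ c ∈ B, x c i := by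
      intro i
      simp only [hy]
      rw [dif_pos i.isLt]
    have hy0 : ∀ i < n, 0 ≤ y i := by
      intro i hi
      simp only [hy]
      rw [dif_pos hi]
      exact Finset.sum_nonneg fun c _ => hx0 c _
    have hy1 : ∀ i < n, y i ≤ 1 := by
      intro i hi
      simp only [hy]
      rw [dif_pos hi]
      calc ∑ c ∈ B, x c ⟨i, hi⟩ ≤ ∑ c : Fin m', x c ⟨i, hi⟩ :=
            Finset.sum_le_sum_of_subset_of_nonneg (Finset.subset_univ B)
              (fun c _ _ => hx0 c _)
        _ = 1 := hx1 _
    have hys : ∑ i ∈ range n, y i * s i ≤ (k:ℝ) := by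
      have h1 : ∑ i ∈ range n, y i * s i = ∑ c ∈ B, ∑ i : Fin n, x c i * s (i:ℕ) := by
        rw [← Fin.sum_univ_eq_sum_range (fun i => y i * s i) n]
        calc ∑ i : Fin n, y (i:ℕ) * s (i:ℕ)
            = ∑ i : Fin n, ∑ c ∈ B, x c i * s (i:ℕ) := by
              refine Finset.sum_congr rfl fun i _ => ?_
              rw [hyfin i, Finset.sum_mul]
          _ = ∑ c ∈ B, ∑ i : Fin n, x c i * s (i:ℕ) := Finset.sum_comm
      rw [h1]
      calc ∑ c ∈ B, ∑ i : Fin n, x c i * s (i:ℕ) ≤ ∑ _c ∈ B, (1:ℝ) :=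
            Finset.sum_le_sum fun c _ => hxs c
        _ = (k:ℝ) := by rw [Finset.sum_const, hcardB]; simp
    have hgreedy := greedy_opt s n hpos hsorted k y hy0 hy1 hys
    have h2 : ∑ i ∈ range n, y i = ∑ c ∈ B, nb c := by
      rw [← Fin.sum_univ_eq_sum_range y n]
      calc ∑ i : Fin n, y (i:ℕ) = ∑ i : Fin n, ∑ c ∈ B, x c i :=
            Finset.sum_congr rfl fun i _ => hyfin i
        _ = ∑ c ∈ B, ∑ i : Fin n, x c i := Finset.sum_comm
        _ = ∑ c ∈ B, nb c := rfl
    rw [hsum1, ← h2]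
    calc ∑ i ∈ range n, y i
        ≤ ∑ i ∈ range n, (min (prefixSum s (i+1)) (k:ℝ) - min (prefixSum s i) (k:ℝ)) / s i :=
          hgreedy
      _ = ∑ b ∈ Finset.range k, u b := by
          simp only [hudef]
          rw [fnfi_prefix s n hpos k]
  have main := hlp f hf0 hconc m' u v hu0 hv0 hva hpre (htotu.trans htotv.symm)
  calc ∑ b ∈ Finset.range ⌈T⌉₊, f (fnfiCount s n b)
      = ∑ b ∈ Finset.range m', f (u b) := hLHS
    _ ≤ ∑ b ∈ Finset.range m', f (v b) := main
    _ = ∑ b : Fin m', f (nb b) := hRHS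
end

section
/- Let 0 < s_1 ≤ s_2 ≤ … ≤ s_n be item sizes, and let N_1,…,N_m be the fractional item counts of the FNFI packing of these items. Then the bins of FNFI are sorted in non-increasing order of the number of items: N_b ≥ N_{b+1} for every 1 ≤ b ≤ m−1. -/
open MeasureTheory Set

/-- The density step function: value `1 / s i` on `[S_i, S_{i+1})`. -/
noncomputable def fnfiStep (s : ℕ → ℝ) (n : ℕ) (x : ℝ) : ℝ :=
  ∑ i ∈ Finset.range n,
    (Set.Ico (prefixSum s i) (prefixSum s (i + 1))).indicator (fun _ => 1 / s i) x

lemma prefixSum_lt {s : ℕ → ℝ} {n : ℕ} (hpos : ∀ i < n, 0 < s i)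
    {i j : ℕ} (hij : i < j) (hj : j ≤ n) : prefixSum s i < prefixSum s j := by
  have key : prefixSum s i + ∑ k ∈ Finset.Ico i j, s k = prefixSum s j := by
    rw [prefixSum, prefixSum, Finset.range_eq_Ico, Finset.range_eq_Ico]
    exact Finset.sum_Ico_consecutive s (Nat.zero_le i) (le_of_lt hij)
  have hpos' : 0 < ∑ k ∈ Finset.Ico i j, s k := by
    apply Finset.sum_pos
    · intro k hk
      exact hpos k (lt_of_lt_of_le (Finset.mem_Ico.mp hk).2 hj)
    · exact ⟨i, Finset.mem_Ico.mpr ⟨le_refl i, hij⟩⟩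
  linarith

lemma prefixSum_le {s : ℕ → ℝ} {n : ℕ} (hpos : ∀ i < n, 0 < s i)
    {i j : ℕ} (hij : i ≤ j) (hj : j ≤ n) : prefixSum s i ≤ prefixSum s j := by
  rcases eq_or_lt_of_le hij with rfl | h
  · exact le_refl _
  · exact le_of_lt (prefixSum_lt hpos h hj)

lemma fnfiStep_nonneg {s : ℕ → ℝ} {n : ℕ} (hpos : ∀ i < n, 0 < s i) (x : ℝ) :
    0 ≤ fnfiStep s n x := by
  apply Finset.sum_nonneg
  intro i hi
  have h := hpos i (Finset.mem_range.mp hi)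
  apply Set.indicator_nonneg
  intro y _
  positivity

lemma fnfiStep_eq {s : ℕ → ℝ} {n : ℕ} (hpos : ∀ i < n, 0 < s i)
    {j : ℕ} (hj : j < n) {x : ℝ}
    (hx : x ∈ Set.Ico (prefixSum s j) (prefixSum s (j + 1))) :
    fnfiStep s n x = 1 / s j := by
  rw [fnfiStep]
  rw [Finset.sum_eq_single_of_mem j (Finset.mem_range.mpr hj)]
  · exact Set.indicator_of_mem hx _
  · intro i hi hij
    apply Set.indicator_of_notMem
    intro hxi
    rcases lt_or_gt_of_ne hij with h | h
    · have : prefixSum s (i + 1) ≤ prefixSum s j :=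
        prefixSum_le hpos h (le_of_lt hj)
      exact absurd (lt_of_lt_of_le hxi.2 this) (not_lt.mpr hx.1)
    · have : prefixSum s (j + 1) ≤ prefixSum s i :=
        prefixSum_le hpos h (le_of_lt (Finset.mem_range.mp hi))
      exact absurd (lt_of_lt_of_le hx.2 this) (not_lt.mpr hxi.1)

lemma fnfiStep_anti {s : ℕ → ℝ} {n : ℕ} (hpos : ∀ i < n, 0 < s i)
    (hsorted : ∀ i j, i ≤ j → j < n → s i ≤ s j)
    {x y : ℝ} (hx : 0 ≤ x) (hxy : x ≤ y) :
    fnfiStep s n y ≤ fnfiStep s n x := by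
  classical
  by_cases hy : ∃ j < n, y ∈ Set.Ico (prefixSum s j) (prefixSum s (j + 1))
  · obtain ⟨j, hj, hyj⟩ := hy
    rw [fnfiStep_eq hpos hj hyj]
    have hP0 : prefixSum s 0 ≤ x := by simpa [prefixSum] using hx
    obtain ⟨i, hij, hPi, hgreat⟩ :
        ∃ i, i ≤ j ∧ prefixSum s i ≤ x ∧ (i < j → ¬ prefixSum s (i + 1) ≤ x) :=
      ⟨Nat.findGreatest (fun k => prefixSum s k ≤ x) j, Nat.findGreatest_le j,
        Nat.findGreatest_spec (P := fun k => prefixSum s k ≤ x) (Nat.zero_le j) hP0,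
        fun h => Nat.findGreatest_is_greatest (P := fun k => prefixSum s k ≤ x)
          (Nat.lt_succ_self _) h⟩
    have hxi : x ∈ Set.Ico (prefixSum s i) (prefixSum s (i + 1)) := by
      refine ⟨hPi, ?_⟩
      rcases eq_or_lt_of_le hij with rfl | h
      · exact lt_of_le_of_lt hxy hyj.2
      · exact lt_of_not_ge (hgreat h)
    rw [fnfiStep_eq hpos (lt_of_le_of_lt hij hj) hxi]
    exact one_div_le_one_div_of_le (hpos i (lt_of_le_of_lt hij hj))
      (hsorted i j hij hj)
  · push_neg at hy
    have hz : fnfiStep s n y = 0 := by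
      apply Finset.sum_eq_zero
      intro i hi
      exact Set.indicator_of_notMem (hy i (Finset.mem_range.mp hi)) _
    rw [hz]
    exact fnfiStep_nonneg hpos x

lemma indicator_intervalIntegrable (k a c d e : ℝ) :
    IntervalIntegrable ((Set.Ico a c).indicator (fun _ => k)) MeasureTheory.volume d e := by
  rw [intervalIntegrable_iff]
  apply MeasureTheory.Integrable.indicator _ measurableSet_Ico
  exact integrableOn_const measure_Ioc_lt_top.ne enorm_ne_top

lemma fnfiStep_intervalIntegrable (s : ℕ → ℝ) (n : ℕ) (d e : ℝ) :
    IntervalIntegrable (fnfiStep s n) MeasureTheory.volume d e := by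
  have : fnfiStep s n = ∑ i ∈ Finset.range n,
      (fun x => (Set.Ico (prefixSum s i) (prefixSum s (i + 1))).indicator
        (fun _ => 1 / s i) x) := by
    funext x
    rw [Finset.sum_apply]
    rfl
  rw [this]
  apply IntervalIntegrable.sum
  intro i _
  exact indicator_intervalIntegrable _ _ _ _ _

lemma volume_Ioc_inter_Ico (a c d e : ℝ) :
    MeasureTheory.volume (Set.Ioc d e ∩ Set.Ico a c)
      = ENNReal.ofReal (min c e - max a d) := by
  apply le_antisymm
  · calc MeasureTheory.volume (Set.Ioc d e ∩ Set.Ico a c)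
        ≤ MeasureTheory.volume (Set.Icc (max a d) (min c e)) := by
          apply measure_mono
          rintro x ⟨⟨h1, h2⟩, h3, h4⟩
          exact ⟨max_le h3 (le_of_lt h1), le_min (le_of_lt h4) h2⟩
      _ = ENNReal.ofReal (min c e - max a d) := Real.volume_Icc
  · calc ENNReal.ofReal (min c e - max a d)
        = MeasureTheory.volume (Set.Ioo (max a d) (min c e)) := Real.volume_Ioo.symm
      _ ≤ MeasureTheory.volume (Set.Ioc d e ∩ Set.Ico a c) := by
          apply measure_mono
          rintro x ⟨h1, h2⟩
          rw [max_lt_iff] at h1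
          rw [lt_min_iff] at h2
          exact ⟨⟨h1.2, le_of_lt h2.2⟩, le_of_lt h1.1, h2.1⟩

lemma integral_indicator_Ico (k a c d e : ℝ) (hde : d ≤ e) :
    ∫ x in d..e, (Set.Ico a c).indicator (fun _ => k) x
      = max 0 (min c e - max a d) * k := by
  rw [intervalIntegral.integral_of_le hde,
    MeasureTheory.setIntegral_indicator measurableSet_Ico,
    MeasureTheory.setIntegral_const, measureReal_def, volume_Ioc_inter_Ico,
    ENNReal.toReal_ofReal', smul_eq_mul, max_comm]

lemma fnfiCount_eq_integral (s : ℕ → ℝ) (n : ℕ) (b : ℕ) :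
    fnfiCount s n b = ∫ x in (b : ℝ)..((b : ℝ) + 1), fnfiStep s n x := by
  have hsum : (∫ x in (b : ℝ)..((b : ℝ) + 1), fnfiStep s n x)
      = ∑ i ∈ Finset.range n, ∫ x in (b : ℝ)..((b : ℝ) + 1),
          (Set.Ico (prefixSum s i) (prefixSum s (i + 1))).indicator (fun _ => 1 / s i) x := by
    rw [← intervalIntegral.integral_finset_sum]
    · rfl
    · intro i _
      exact indicator_intervalIntegrable _ _ _ _ _
  rw [hsum, fnfiCount]
  apply Finset.sum_congr rfl
  intro i _
  rw [integral_indicator_Ico _ _ _ _ _ (by linarith)]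
  exact div_eq_mul_one_div _ _

/-- The bins of the FNFI packing are sorted in non-increasing order of their
fractional numbers of items. -/
theorem fnfi_counts_sorted (n : ℕ) (s : ℕ → ℝ)
    (hpos : ∀ i < n, 0 < s i)
    (hsorted : ∀ i j, i ≤ j → j < n → s i ≤ s j)
    (b : ℕ) (hb : b + 1 < ⌈prefixSum s n⌉₊) :
    fnfiCount s n (b + 1) ≤ fnfiCount s n b := by
  have hcast : ((b + 1 : ℕ) : ℝ) = (b : ℝ) + 1 := by push_cast; ring
  have h1 : fnfiCount s n (b + 1) = ∫ x in ((b:ℝ)+1)..(((b:ℝ)+1)+1), fnfiStep s n x := by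
    rw [fnfiCount_eq_integral s n (b+1), hcast]
  have h2 : (∫ x in ((b:ℝ)+1)..(((b:ℝ)+1)+1), fnfiStep s n x)
      = ∫ x in (b:ℝ)..((b:ℝ)+1), fnfiStep s n (x + 1) :=
    (intervalIntegral.integral_comp_add_right (fnfiStep s n) 1).symm
  have hint : IntervalIntegrable (fun x => fnfiStep s n (x + 1))
      MeasureTheory.volume (b:ℝ) ((b:ℝ)+1) := by
    have h := (fnfiStep_intervalIntegrable s n ((b:ℝ)+1) (((b:ℝ)+1)+1)).comp_add_right 1
    rw [show (b:ℝ)+1-1 = (b:ℝ) by ring, show ((b:ℝ)+1)+1-1 = (b:ℝ)+1 by ring] at h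
    exact h
  have h3 : (∫ x in (b:ℝ)..((b:ℝ)+1), fnfiStep s n (x + 1))
      ≤ ∫ x in (b:ℝ)..((b:ℝ)+1), fnfiStep s n x := by
    apply intervalIntegral.integral_mono_on (by linarith) hint
      (fnfiStep_intervalIntegrable s n _ _)
    intro x hx
    have hx0 : (0:ℝ) ≤ x := le_trans (by positivity) hx.1
    exact fnfiStep_anti hpos hsorted hx0 (by linarith)
  rw [h1, h2, fnfiCount_eq_integral s n b]
  exact h3
end

section
/- Let I be an instance of GCBP with item sizes 0 < s_1 ≤ s_2 ≤ … ≤ s_n, let f be a valid cost function and let g be its piecewise-linear extension to [0,∞). Then the FNFI fractional packing gives a lower bound on the optimum: Σ_{b=1}^{m} g(N_b) ≤ OPT_f(I), where N_1,…,N_m are the fractional item counts of the FNFI packing. -/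
/-- The cost of a packing `P` of `n` items into `m` bins under cost function `f`:
the sum over bins of `f` applied to the number of items in the bin. -/
noncomputable def packCost {n m : ℕ} (f : ℕ → ℝ) (P : Fin n → Fin m) : ℝ :=
  ∑ b : Fin m, f ((Finset.univ.filter (fun i => P i = b)).card)

/-- A packing is feasible if the items assigned to each bin have total size at most 1. -/
def packFeasible {n m : ℕ} (s : Fin n → ℝ) (P : Fin n → Fin m) : Prop :=
  ∀ b : Fin m, ∑ i ∈ Finset.univ.filter (fun i => P i = b), s i ≤ 1

/-- A valid cost function: `f 0 = 0`, `f` non-decreasing, and `f` concave on the integers. -/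
def ValidCost (f : ℕ → ℝ) : Prop :=
  f 0 = 0 ∧ Monotone f ∧ ∀ k : ℕ, f (k + 2) - f (k + 1) ≤ f (k + 1) - f k

/-- The piecewise-linear extension of `f : ℕ → ℝ` to the non-negative reals. -/
noncomputable def plExt (f : ℕ → ℝ) (x : ℝ) : ℝ :=
  f ⌊x⌋₊ + (x - ⌊x⌋₊) * (f (⌊x⌋₊ + 1) - f ⌊x⌋₊)

/- ### Auxiliary lemmas -/

/-- Sum of clamps equals min. -/
lemma FnfiAux.clamp_sum (x : ℝ) (hx : 0 ≤ x) (Q : ℕ) :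
    ∑ q ∈ Finset.range Q, max 0 (min (x - q) 1) = min x Q := by
  induction Q with
  | zero => simp [min_eq_right hx]
  | succ Q ih =>
    rw [Finset.sum_range_succ, ih]
    push_cast
    rcases le_total x (Q : ℝ) with h | h <;>
      rcases le_total x ((Q : ℝ) + 1) with h2 | h2 <;>
      simp [min_def, max_def] <;> split_ifs <;> push_cast <;> linarith

/-- min as total minus excess. -/
lemma FnfiAux.min_eq_sub (x Q : ℝ) : min x Q = x - max 0 (x - Q) := by
  rcases le_total x Q with h | h <;> simp [min_def, max_def] <;> split_ifs <;> linarith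

/-- Splitting an overlap across unit intervals. -/
lemma FnfiAux.sum_ov (x y : ℝ) (hx : 0 ≤ x) (k : ℕ) :
    ∑ b ∈ Finset.range k, max 0 (min y ((b : ℝ) + 1) - max x (b : ℝ)) =
      max 0 (min y k - x) := by
  induction k with
  | zero =>
    simp only [Finset.range_zero, Finset.sum_empty, Nat.cast_zero]
    rw [eq_comm, max_eq_left (by linarith [min_le_right y (0:ℝ)])]
  | succ k ih =>
    rw [Finset.sum_range_succ, ih]
    push_cast
    rcases le_total y (k : ℝ) with h | h <;>
      rcases le_total x (k : ℝ) with h2 | h2 <;>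
      rcases le_total y ((k : ℝ) + 1) with h3 | h3 <;>
      simp [min_def, max_def] <;> split_ifs <;> linarith

/-- Abel summation positivity. -/
lemma FnfiAux.abel_pos : ∀ (M : ℕ) (u v : ℕ → ℝ), (∀ q < M, 0 ≤ u q) →
    (∀ i j, i ≤ j → j < M → u j ≤ u i) →
    (∀ Q ≤ M, 0 ≤ ∑ q ∈ Finset.range Q, v q) →
    0 ≤ ∑ q ∈ Finset.range M, u q * v q := by
  intro M
  induction M with
  | zero => intro u v _ _ _; simp
  | succ M ih =>
    intro u v hu0 hmono hv
    have key : ∑ q ∈ Finset.range (M + 1), u q * v q =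
        (∑ q ∈ Finset.range M, (u q - u M) * v q) + u M * ∑ q ∈ Finset.range (M + 1), v q := by
      rw [Finset.sum_range_succ, Finset.mul_sum, Finset.sum_range_succ (fun q => u M * v q)]
      have : ∑ q ∈ Finset.range M, (u q - u M) * v q =
          ∑ q ∈ Finset.range M, u q * v q - ∑ q ∈ Finset.range M, u M * v q := by
        rw [← Finset.sum_sub_distrib]; exact Finset.sum_congr rfl fun q _ => by ring
      rw [this]; ring
    rw [key]
    have h1 : 0 ≤ ∑ q ∈ Finset.range M, (u q - u M) * v q := by
      apply ih
      · intro q hq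
        have := hmono q M (le_of_lt hq) (Nat.lt_succ_self M); linarith
      · intro i j hij hj
        have := hmono i j hij (Nat.lt_succ_of_lt hj); linarith
      · intro Q hQ; exact hv Q (le_trans hQ (Nat.le_succ M))
    have h2 : 0 ≤ u M * ∑ q ∈ Finset.range (M + 1), v q :=
      mul_nonneg (hu0 M (Nat.lt_succ_self M)) (hv (M + 1) le_rfl)
    linarith

namespace FnfiAux
variable {n : ℕ} {s : ℕ → ℝ}

lemma prefixSum_nonneg (hpos : ∀ i < n, 0 < s i) {j : ℕ} (hj : j ≤ n) :
    0 ≤ prefixSum s j :=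
  Finset.sum_nonneg fun i hi =>
    le_of_lt (hpos i (lt_of_lt_of_le (Finset.mem_range.mp hi) hj))

lemma prefixSum_mono (hpos : ∀ i < n, 0 < s i) {a b : ℕ} (hab : a ≤ b) (hb : b ≤ n) :
    prefixSum s a ≤ prefixSum s b := by
  unfold prefixSum
  apply Finset.sum_le_sum_of_subset_of_nonneg (Finset.range_subset_range.mpr hab)
  intro i hi _
  exact le_of_lt (hpos i (lt_of_lt_of_le (Finset.mem_range.mp hi) hb))

/-- Partial sums of the FNFI counts. -/
lemma sum_fnfiCount (hpos : ∀ i < n, 0 < s i) (k : ℕ) :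
    ∑ b ∈ Finset.range k, fnfiCount s n b =
      ∑ i ∈ Finset.range n, max 0 (min (prefixSum s (i + 1)) k - prefixSum s i) / s i := by
  unfold fnfiCount
  rw [Finset.sum_comm]
  apply Finset.sum_congr rfl
  intro i hi
  rw [← Finset.sum_div]
  congr 1
  exact sum_ov _ _ (prefixSum_nonneg hpos (le_of_lt (Finset.mem_range.mp hi))) k

lemma fnfiCount_nonneg (hpos : ∀ i < n, 0 < s i) (b : ℕ) : 0 ≤ fnfiCount s n b := by
  apply Finset.sum_nonneg
  intro i hi
  apply div_nonneg (le_max_left _ _) (le_of_lt (hpos i (Finset.mem_range.mp hi)))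

lemma fnfiCount_le (hpos : ∀ i < n, 0 < s i) (b : ℕ) : fnfiCount s n b ≤ n := by
  unfold fnfiCount
  calc ∑ i ∈ Finset.range n,
      max 0 (min (prefixSum s (i + 1)) ((b : ℝ) + 1) - max (prefixSum s i) (b : ℝ)) / s i
      ≤ ∑ i ∈ Finset.range n, (1 : ℝ) := by
        apply Finset.sum_le_sum
        intro i hi
        have hin := Finset.mem_range.mp hi
        have hs := hpos i hin
        rw [div_le_one hs]
        have h1 : prefixSum s (i + 1) - prefixSum s i = s i := by
          unfold prefixSum; rw [Finset.sum_range_succ]; ring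
        have h2 := min_le_left (prefixSum s (i + 1)) ((b : ℝ) + 1)
        have h3 := le_max_left (prefixSum s i) (b : ℝ)
        exact max_le (le_of_lt hs) (by linarith)
    _ = n := by simp

/-- The total fractional count equals `n`. -/
lemma sum_fnfiCount_total (hpos : ∀ i < n, 0 < s i) :
    ∑ b ∈ Finset.range ⌈prefixSum s n⌉₊, fnfiCount s n b = n := by
  rw [sum_fnfiCount hpos]
  rw [Finset.sum_congr rfl (fun i hi => ?_), Finset.sum_const, Finset.card_range,
    nsmul_eq_mul, mul_one]
  have hin := Finset.mem_range.mp hi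
  have hs := hpos i hin
  have hle : prefixSum s (i + 1) ≤ (⌈prefixSum s n⌉₊ : ℝ) :=
    le_trans (prefixSum_mono hpos hin (le_refl n)) (Nat.le_ceil _)
  have h1 : prefixSum s (i + 1) - prefixSum s i = s i := by
    unfold prefixSum; rw [Finset.sum_range_succ]; ring
  rw [min_eq_left hle]
  rw [max_eq_right (by linarith)]
  rw [h1, div_self (ne_of_gt hs)]

/-- Sum of the `a` smallest items is at most the sum over any `a`-element subset. -/
lemma smallest_items (hsorted : ∀ i j, i ≤ j → j < n → s i ≤ s j) :
    ∀ (a : ℕ) (A : Finset ℕ), A.card = a → A ⊆ Finset.range n →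
      prefixSum s a ≤ ∑ i ∈ A, s i := by
  intro a
  induction a with
  | zero =>
    intro A hc _
    rw [Finset.card_eq_zero.mp hc]
    simp [prefixSum]
  | succ a ih =>
    intro A hc hsub
    have hne : A.Nonempty := Finset.card_pos.mp (by omega)
    set M := A.max' hne with hM
    have hMA : M ∈ A := A.max'_mem hne
    have hsum : ∑ i ∈ A.erase M, s i + s M = ∑ i ∈ A, s i :=
      Finset.sum_erase_add A s hMA
    have h1 := ih (A.erase M) (by rw [Finset.card_erase_of_mem hMA, hc]; omega)
      (Finset.Subset.trans (Finset.erase_subset M A) hsub)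
    have hMn : M < n := Finset.mem_range.mp (hsub hMA)
    have haM : a ≤ M := by
      have hsub2 : A ⊆ Finset.range (M + 1) := by
        intro x hx
        exact Finset.mem_range.mpr (Nat.lt_succ_of_le (A.le_max' x hx))
      have := Finset.card_le_card hsub2
      rw [hc, Finset.card_range] at this
      omega
    have hsa : s a ≤ s M := hsorted a M haM hMn
    have : prefixSum s (a + 1) = prefixSum s a + s a := by
      unfold prefixSum; rw [Finset.sum_range_succ]
    linarith

lemma plExt_nat (f : ℕ → ℝ) (c : ℕ) : plExt f c = f c := by
  simp [plExt, Nat.floor_natCast]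

lemma diff_antitone {f : ℕ → ℝ} (hconc : ∀ k, f (k + 2) - f (k + 1) ≤ f (k + 1) - f k) :
    ∀ i j, i ≤ j → f (j + 1) - f j ≤ f (i + 1) - f i := by
  intro i j hij
  induction j, hij using Nat.le_induction with
  | base => exact le_refl _
  | succ j hij ih =>
    calc f (j + 1 + 1) - f (j + 1) ≤ f (j + 1) - f j := by
          have := hconc j; linarith
      _ ≤ f (i + 1) - f i := ih

lemma plExt_decomp (f : ℕ → ℝ) (hf0 : f 0 = 0) (M : ℕ) (x : ℝ) (h0 : 0 ≤ x) (hM : x ≤ M) :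
    plExt f x = ∑ q ∈ Finset.range M, (f (q + 1) - f q) * max 0 (min (x - q) 1) := by
  set K := ⌊x⌋₊ with hKdef
  have hKx : (K : ℝ) ≤ x := Nat.floor_le h0
  have hxK : x < K + 1 := Nat.lt_floor_add_one x
  have hKM : K ≤ M := by exact_mod_cast le_trans hKx hM
  rw [← Finset.sum_range_add_sum_Ico _ hKM]
  have hterm : ∀ q ∈ Finset.range K,
      (f (q + 1) - f q) * max 0 (min (x - q) 1) = f (q + 1) - f q := by
    intro q hq
    have hq := Finset.mem_range.mp hq
    have : (1 : ℝ) ≤ x - q := by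
      have : (q : ℝ) + 1 ≤ K := by exact_mod_cast Nat.succ_le_of_lt hq
      linarith
    rw [min_eq_right this, max_eq_right zero_le_one, mul_one]
  rw [Finset.sum_congr rfl hterm, Finset.sum_range_sub, hf0, sub_zero]
  rcases eq_or_lt_of_le hKM with heq | hlt
  · have hxM : (M : ℝ) ≤ x := by rw [← heq]; exact hKx
    have hxeq : x = K := by rw [heq]; exact le_antisymm hM hxM
    rw [← heq]
    simp [plExt, ← hKdef, hxeq]
  · rw [Finset.sum_eq_sum_Ico_succ_bot hlt]
    have h2 : ∑ q ∈ Finset.Ico (K + 1) M, (f (q + 1) - f q) * max 0 (min (x - q) 1) = 0 := by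
      apply Finset.sum_eq_zero
      intro q hq
      have hq1 := (Finset.mem_Ico.mp hq).1
      have : x - q ≤ 0 := by
        have : (K : ℝ) + 1 ≤ q := by exact_mod_cast hq1
        linarith
      rw [min_eq_left (by linarith), max_eq_left (by linarith), mul_zero]
    rw [h2, add_zero]
    have h3 : max 0 (min (x - K) 1) = x - K := by
      rw [min_eq_left (by linarith), max_eq_right (by linarith)]
    rw [h3]
    simp only [plExt, ← hKdef]
    ring

/-- Claim C: the excess over any threshold `Q` in the FNFI packing dominates the
excess in any feasible packing. -/
lemma claimC {m' : ℕ} (hpos : ∀ i < n, 0 < s i)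
    (hsorted : ∀ i j, i ≤ j → j < n → s i ≤ s j)
    (P : Fin n → Fin m') (hfeas : packFeasible (fun i => s (i : ℕ)) P)
    (Q : ℝ) (hQ : 0 ≤ Q) :
    ∑ j : Fin m', max 0 (((Finset.univ.filter (fun i => P i = j)).card : ℝ) - Q) ≤
      ∑ b ∈ Finset.range ⌈prefixSum s n⌉₊, max 0 (fnfiCount s n b - Q) := by
  classical
  set m := ⌈prefixSum s n⌉₊ with hm
  set cnt : Fin m' → ℕ := fun j => (Finset.univ.filter (fun i => P i = j)).card with hcnt
  set Fbig : Finset (Fin m') := Finset.univ.filter (fun j => Q < (cnt j : ℝ)) with hFbig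
  set k := Fbig.card with hk
  -- LHS rewrite
  have hLHS : ∑ j : Fin m', max 0 ((cnt j : ℝ) - Q) = ∑ j ∈ Fbig, ((cnt j : ℝ) - Q) := by
    rw [← Finset.sum_filter_add_sum_filter_not Finset.univ (fun j => Q < (cnt j : ℝ))]
    rw [← hFbig]
    have hz : ∑ j ∈ Finset.univ.filter (fun j => ¬ Q < (cnt j : ℝ)),
        max 0 ((cnt j : ℝ) - Q) = 0 := by
      apply Finset.sum_eq_zero
      intro j hj
      have := (Finset.mem_filter.mp hj).2
      rw [max_eq_left (by push_neg at this; linarith)]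
    rw [hz, add_zero]
    apply Finset.sum_congr rfl
    intro j hj
    have := (Finset.mem_filter.mp hj).2
    rw [max_eq_right (by linarith)]
  set A : Finset (Fin n) := Finset.univ.filter (fun i => P i ∈ Fbig) with hA
  have hfiber : ∀ j ∈ Fbig, A.filter (fun i => P i = j) =
      Finset.univ.filter (fun i => P i = j) := by
    intro j hj
    ext i
    simp only [hA, Finset.mem_filter, Finset.mem_univ, true_and, Finset.filter_filter]
    constructor
    · rintro ⟨_, h⟩; exact h
    · intro h; exact ⟨by rw [h]; exact hj, h⟩
  have hcardA : A.card = ∑ j ∈ Fbig, cnt j := by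
    rw [Finset.card_eq_sum_card_fiberwise (f := P) (s := A) (t := Fbig)
      (fun i hi => (Finset.mem_filter.mp hi).2)]
    exact Finset.sum_congr rfl fun j hj => by rw [hfiber j hj]
  have hsigmaA : ∑ i ∈ A, s (i : ℕ) ≤ (k : ℝ) := by
    rw [← Finset.sum_fiberwise_of_maps_to (g := P) (s := A) (t := Fbig)
      (fun i hi => (Finset.mem_filter.mp hi).2)]
    calc ∑ j ∈ Fbig, ∑ i ∈ A.filter (fun i => P i = j), s (i : ℕ)
        ≤ ∑ j ∈ Fbig, 1 := by
          apply Finset.sum_le_sum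
          intro j hj
          rw [hfiber j hj]
          exact hfeas j
      _ = (k : ℝ) := by simp [hk]
  rw [hLHS]
  have hsum_sub : ∑ j ∈ Fbig, ((cnt j : ℝ) - Q) = (A.card : ℝ) - k * Q := by
    rw [Finset.sum_sub_distrib, Finset.sum_const, hcardA]
    push_cast
    ring
  rw [hsum_sub]
  have hAn : A.card ≤ n := le_trans (Finset.card_le_univ A) (by simp)
  by_cases hkm : k ≤ m
  · -- translate A to a subset of range n
    set A' : Finset ℕ := A.image (fun i : Fin n => (i : ℕ)) with hA'
    have hcard' : A'.card = A.card := Finset.card_image_of_injective A Fin.val_injective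
    have hsub' : A' ⊆ Finset.range n := by
      intro x hx
      obtain ⟨i, _, rfl⟩ := Finset.mem_image.mp hx
      exact Finset.mem_range.mpr i.isLt
    have hsum' : ∑ i ∈ A', s i = ∑ i ∈ A, s (i : ℕ) :=
      Finset.sum_image (fun x _ y _ h => Fin.val_injective h)
    have hSa : prefixSum s A.card ≤ (k : ℝ) := by
      have := smallest_items hsorted A.card A' (by rw [hcard']) hsub'
      rw [hsum'] at this
      linarith
    have hPNk : (A.card : ℝ) ≤ ∑ b ∈ Finset.range k, fnfiCount s n b := by
      rw [sum_fnfiCount hpos k]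
      have hones : ∀ i ∈ Finset.range A.card,
          (1 : ℝ) ≤ max 0 (min (prefixSum s (i + 1)) k - prefixSum s i) / s i := by
        intro i hi
        have hia := Finset.mem_range.mp hi
        have hin : i < n := lt_of_lt_of_le hia hAn
        have hs := hpos i hin
        have h1 : prefixSum s (i + 1) - prefixSum s i = s i := by
          unfold prefixSum; rw [Finset.sum_range_succ]; ring
        have hle : prefixSum s (i + 1) ≤ (k : ℝ) :=
          le_trans (prefixSum_mono hpos hia hAn) hSa
        rw [min_eq_left hle, max_eq_right (by linarith), h1, div_self (ne_of_gt hs)]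
      calc (A.card : ℝ) = ∑ _i ∈ Finset.range A.card, (1 : ℝ) := by simp
        _ ≤ ∑ i ∈ Finset.range A.card,
            max 0 (min (prefixSum s (i + 1)) (k : ℝ) - prefixSum s i) / s i :=
          Finset.sum_le_sum hones
        _ ≤ ∑ i ∈ Finset.range n,
            max 0 (min (prefixSum s (i + 1)) (k : ℝ) - prefixSum s i) / s i := by
          apply Finset.sum_le_sum_of_subset_of_nonneg (Finset.range_subset_range.mpr hAn)
          intro i hi _
          exact div_nonneg (le_max_left _ _) (le_of_lt (hpos i (Finset.mem_range.mp hi)))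
    calc (A.card : ℝ) - k * Q ≤ (∑ b ∈ Finset.range k, fnfiCount s n b) - k * Q := by
          linarith
      _ = ∑ b ∈ Finset.range k, (fnfiCount s n b - Q) := by
          rw [Finset.sum_sub_distrib, Finset.sum_const, Finset.card_range, nsmul_eq_mul]
      _ ≤ ∑ b ∈ Finset.range k, max 0 (fnfiCount s n b - Q) :=
          Finset.sum_le_sum fun b _ => le_max_right _ _
      _ ≤ ∑ b ∈ Finset.range m, max 0 (fnfiCount s n b - Q) := by
          apply Finset.sum_le_sum_of_subset_of_nonneg (Finset.range_subset_range.mpr hkm)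
          intro b _ _
          exact le_max_left _ _
  · push_neg at hkm
    have htot : ∑ b ∈ Finset.range m, fnfiCount s n b = n := sum_fnfiCount_total hpos
    calc (A.card : ℝ) - k * Q ≤ (n : ℝ) - m * Q := by
          have h1 : (A.card : ℝ) ≤ n := by exact_mod_cast hAn
          have h2 : (m : ℝ) ≤ k := by exact_mod_cast le_of_lt hkm
          nlinarith
      _ = ∑ b ∈ Finset.range m, (fnfiCount s n b - Q) := by
          rw [Finset.sum_sub_distrib, Finset.sum_const, Finset.card_range, nsmul_eq_mul, htot]
      _ ≤ ∑ b ∈ Finset.range m, max 0 (fnfiCount s n b - Q) :=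
          Finset.sum_le_sum fun b _ => le_max_right _ _

end FnfiAux

/-- The cost of the FNFI fractional packing, computed with the piecewise-linear
extension of a valid cost function `f`, is a lower bound on `OPT_f(I)`. -/
theorem fnfi_lower_bound (n : ℕ) (s : ℕ → ℝ)
    (hpos : ∀ i < n, 0 < s i) (hub : ∀ i < n, s i ≤ 1)
    (hsorted : ∀ i j, i ≤ j → j < n → s i ≤ s j)
    (f : ℕ → ℝ) (hf : ValidCost f) :
    ∑ b ∈ Finset.range ⌈prefixSum s n⌉₊, plExt f (fnfiCount s n b) ≤
      sInf {c : ℝ | ∃ (m' : ℕ) (P : Fin n → Fin m'),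
        packFeasible (fun i => s (i : ℕ)) P ∧ packCost f P = c} := by
  classical
  obtain ⟨hf0, hmono, hconc⟩ := hf
  apply le_csInf
  · refine ⟨packCost f (fun i : Fin n => i), n, fun i => i, ?_, rfl⟩
    intro b
    have : Finset.univ.filter (fun i : Fin n => i = b) = {b} := by
      ext i; simp
    rw [this, Finset.sum_singleton]
    exact hub b b.isLt
  · rintro c ⟨m', P, hfeas, rfl⟩
    set m := ⌈prefixSum s n⌉₊ with hm
    set cnt : Fin m' → ℕ := fun j => (Finset.univ.filter (fun i => P i = j)).card with hcnt
    have hcntle : ∀ j, cnt j ≤ n := fun j =>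
      le_trans (Finset.card_le_univ _) (by simp)
    have htotc : ∑ j : Fin m', (cnt j : ℕ) = n := by
      rw [hcnt]
      rw [← Finset.card_eq_sum_card_fiberwise (f := P) (t := Finset.univ)
        (fun i _ => Finset.mem_univ _)]
      simp
    -- decompositions
    have hL : ∑ b ∈ Finset.range m, plExt f (fnfiCount s n b) =
        ∑ q ∈ Finset.range n, (f (q + 1) - f q) *
          (∑ b ∈ Finset.range m, max 0 (min (fnfiCount s n b - q) 1)) := by
      rw [Finset.sum_congr rfl (fun b _ => FnfiAux.plExt_decomp f hf0 n _
        (FnfiAux.fnfiCount_nonneg hpos b) (FnfiAux.fnfiCount_le hpos b))]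
      rw [Finset.sum_comm]
      exact Finset.sum_congr rfl fun q _ => (Finset.mul_sum _ _ _).symm
    have hR : packCost f P =
        ∑ q ∈ Finset.range n, (f (q + 1) - f q) *
          (∑ j : Fin m', max 0 (min ((cnt j : ℝ) - q) 1)) := by
      unfold packCost
      have hstep : ∀ j : Fin m', f ((Finset.univ.filter (fun i => P i = j)).card) =
          ∑ q ∈ Finset.range n, (f (q + 1) - f q) * max 0 (min ((cnt j : ℝ) - q) 1) := by
        intro j
        rw [← FnfiAux.plExt_nat f (cnt j)]
        exact FnfiAux.plExt_decomp f hf0 n _ (Nat.cast_nonneg _)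
          (by exact_mod_cast hcntle j)
      rw [Finset.sum_congr rfl (fun j _ => hstep j), Finset.sum_comm]
      exact Finset.sum_congr rfl fun q _ => (Finset.mul_sum _ _ _).symm
    rw [hL, hR, ← sub_nonneg, ← Finset.sum_sub_distrib]
    have hterm : ∀ q ∈ Finset.range n,
        (f (q + 1) - f q) * (∑ j : Fin m', max 0 (min ((cnt j : ℝ) - q) 1)) -
          (f (q + 1) - f q) * (∑ b ∈ Finset.range m, max 0 (min (fnfiCount s n b - q) 1)) =
        (f (q + 1) - f q) * ((∑ j : Fin m', max 0 (min ((cnt j : ℝ) - q) 1)) -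
          (∑ b ∈ Finset.range m, max 0 (min (fnfiCount s n b - q) 1))) := by
      intro q _; ring
    rw [Finset.sum_congr rfl hterm]
    apply FnfiAux.abel_pos n
    · intro q _
      have := hmono (Nat.le_succ q)
      linarith
    · intro i j hij _
      exact FnfiAux.diff_antitone hconc i j hij
    · intro Q hQ
      -- partial sums of v are nonnegative
      have hswap1 : ∑ q ∈ Finset.range Q, ∑ j : Fin m', max 0 (min ((cnt j : ℝ) - q) 1) =
          ∑ j : Fin m', min ((cnt j : ℝ)) Q := by
        rw [Finset.sum_comm]
        exact Finset.sum_congr rfl fun j _ =>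
          FnfiAux.clamp_sum (cnt j : ℝ) (Nat.cast_nonneg _) Q
      have hswap2 : ∑ q ∈ Finset.range Q,
          ∑ b ∈ Finset.range m, max 0 (min (fnfiCount s n b - q) 1) =
          ∑ b ∈ Finset.range m, min (fnfiCount s n b) Q := by
        rw [Finset.sum_comm]
        exact Finset.sum_congr rfl fun b _ =>
          FnfiAux.clamp_sum _ (FnfiAux.fnfiCount_nonneg hpos b) Q
      rw [Finset.sum_sub_distrib, hswap1, hswap2]
      have e1 : ∑ j : Fin m', min ((cnt j : ℝ)) Q =
          (n : ℝ) - ∑ j : Fin m', max 0 ((cnt j : ℝ) - Q) := by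
        rw [Finset.sum_congr rfl (fun j _ => FnfiAux.min_eq_sub (cnt j : ℝ) Q),
          Finset.sum_sub_distrib]
        congr 1
        rw [← htotc]
        push_cast
        rfl
      have e2 : ∑ b ∈ Finset.range m, min (fnfiCount s n b) Q =
          (n : ℝ) - ∑ b ∈ Finset.range m, max 0 (fnfiCount s n b - Q) := by
        rw [Finset.sum_congr rfl (fun b _ => FnfiAux.min_eq_sub _ (Q : ℝ)),
          Finset.sum_sub_distrib, FnfiAux.sum_fnfiCount_total hpos]
      rw [e1, e2]
      have := FnfiAux.claimC hpos hsorted P hfeas (Q : ℝ) (Nat.cast_nonneg Q)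
      linarith
end

section
/- Let f : ℕ → ℝ be non-decreasing with non-increasing increments, let ε > 0, and let k_{t−1} < k_t ≤ k_p and n_C ≥ 0 be integers satisfying k_{t−1} < k_p − n_C ≤ k_t and f(k_t) ≤ (1+ε)·f(k_{t−1}). Then f(k_t + n_C) ≤ (1+ε)·f(k_p). (This is the fact that the real cost of a bin packed according to an extended configuration, after adding small items up to the bound given by its main window, is at most (1+ε) times the cost f(k_p) charged by the linear program.) -/
private lemma concave_shift (f : ℕ → ℝ)
    (hconc : ∀ k : ℕ, f (k + 2) - f (k + 1) ≤ f (k + 1) - f k) :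
    ∀ n x : ℕ, f (x + 1 + n) - f (x + 1) ≤ f (x + n) - f x := by
  intro n
  induction n with
  | zero => intro x; simp
  | succ n ih =>
    intro x
    have h1 := hconc (x + n)
    have h2 := ih x
    have e1 : x + 1 + (n + 1) = x + n + 2 := by ring
    have e2 : x + 1 + n = x + n + 1 := by ring
    rw [e1]
    calc f (x + n + 2) - f (x + 1)
        = (f (x + n + 2) - f (x + n + 1)) + (f (x + 1 + n) - f (x + 1)) := by rw [e2]; ring
      _ ≤ (f (x + n + 1) - f (x + n)) + (f (x + n) - f x) := add_le_add h1 h2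
      _ = f (x + n + 1) - f x := by ring

private lemma concave_shift' (f : ℕ → ℝ)
    (hconc : ∀ k : ℕ, f (k + 2) - f (k + 1) ≤ f (k + 1) - f k)
    (x y n : ℕ) (hxy : x ≤ y) :
    f (y + n) - f y ≤ f (x + n) - f x := by
  induction y with
  | zero => simp_all
  | succ y ih =>
    rcases Nat.lt_or_ge x (y + 1) with h | h
    · have hx : x ≤ y := Nat.lt_succ_iff.mp h
      calc f (y + 1 + n) - f (y + 1) ≤ f (y + n) - f y := concave_shift f hconc n y
        _ ≤ f (x + n) - f x := ih hx
    · have : x = y + 1 := le_antisymm hxy h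
      subst this; exact le_refl _

/-- The real cost of a bin packed according to an extended configuration `(C, k_p)`,
after adding small items up to the bound of its main window, is at most
`(1+ε) · f (k_p)`: if `k_{t-1} < k_t ≤ k_p`, `k_{t-1} < k_p - n_C ≤ k_t` and
`f k_t ≤ (1+ε) f k_{t-1}`, then `f (k_t + n_C) ≤ (1+ε) f k_p`. -/
theorem extended_configuration_real_cost (f : ℕ → ℝ)
    (hmono : Monotone f)
    (hconc : ∀ k : ℕ, f (k + 2) - f (k + 1) ≤ f (k + 1) - f k)
    (ε : ℝ) (hε : 0 < ε)
    (kt1 kt kp nC : ℕ)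
    (h1 : kt1 < kt) (h2 : kt ≤ kp)
    (h3 : kt1 < kp - nC) (h4 : kp - nC ≤ kt)
    (hstep : f kt ≤ (1 + ε) * f kt1) :
    f (kt + nC) ≤ (1 + ε) * f kp := by
  have hnC : nC ≤ kp := by omega
  have key := concave_shift' f hconc (kp - nC) kt nC h4
  rw [Nat.sub_add_cancel hnC] at key
  have hm1 : f kt1 ≤ f (kp - nC) := hmono (le_of_lt h3)
  have hm2 : f kt1 ≤ f kp := hmono (by omega)
  nlinarith
end

section
/- Let f : ℕ → ℝ be non-decreasing with non-increasing increments. Then for all integers a ≥ 1 and m ≥ 1, (1/m)·f(m) + f(a−1) ≤ (1 + 1/m)·f(a). (With ε = 1/m this is the inequality ε·f(1/ε) + f(a−1) ≤ (1+ε)·f(a), which shows that charging a cost of ε·f(1/ε) to each item removed from a bin covers the cost of the dedicated bins containing 1/ε removed items each.) -/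
lemma inc_antitone (f : ℕ → ℝ)
    (hconc : ∀ k : ℕ, f (k + 2) - f (k + 1) ≤ f (k + 1) - f k) :
    ∀ i j : ℕ, i ≤ j → f (j + 1) - f j ≤ f (i + 1) - f i := by
  intro i j hij
  induction j with
  | zero =>
    have : i = 0 := Nat.le_zero.mp hij
    simp [this]
  | succ n ih =>
    rcases Nat.lt_or_ge i (n+1) with h | h
    · calc f (n + 1 + 1) - f (n + 1) ≤ f (n + 1) - f n := hconc n
        _ ≤ f (i + 1) - f i := ih (Nat.lt_succ_iff.mp h)
    · have : i = n + 1 := le_antisymm hij h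
      simp [this]

/-- For a non-decreasing concave `f : ℕ → ℝ` and integers `a, m ≥ 1`:
`(1/m) · f m + f (a-1) ≤ (1 + 1/m) · f a`. -/
theorem removed_item_charge (f : ℕ → ℝ)
    (hmono : Monotone f)
    (hconc : ∀ k : ℕ, f (k + 2) - f (k + 1) ≤ f (k + 1) - f k)
    (a m : ℕ) (ha : 1 ≤ a) (hm : 1 ≤ m) :
    (1 / (m : ℝ)) * f m + f (a - 1) ≤ (1 + 1 / (m : ℝ)) * f a := by
  have ha1 : a - 1 + 1 = a := Nat.succ_pred_eq_of_pos ha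
  set d : ℝ := f a - f (a - 1) with hd
  have hd0 : 0 ≤ d := sub_nonneg.mpr (hmono (Nat.sub_le a 1))
  have grow : ∀ n : ℕ, f (a + n) ≤ f a + n * d := by
    intro n
    induction n with
    | zero => simp
    | succ n ih =>
      have step : f (a + n + 1) - f (a + n) ≤ d := by
        have := inc_antitone f hconc (a - 1) (a + n) (le_trans (Nat.sub_le a 1) (Nat.le_add_right a n))
        rwa [ha1] at this
      have : f (a + (n + 1)) ≤ f (a + n) + d := by
        have : f (a + n + 1) ≤ f (a + n) + d := by linarith
        simpa [Nat.add_assoc] using this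
      push_cast
      nlinarith
  -- bound f m ≤ f a + m * d
  have key : f m ≤ f a + m * d := by
    rcases le_or_gt m a with h | h
    · have := hmono h
      nlinarith [mul_nonneg (Nat.cast_nonneg m : (0:ℝ) ≤ m) hd0]
    · obtain ⟨n, rfl⟩ := Nat.exists_eq_add_of_le h.le
      have := grow n
      have hn : (n : ℝ) ≤ (a + n : ℕ) := by push_cast; linarith [show (0:ℝ) ≤ a from Nat.cast_nonneg a]
      nlinarith
  have hmpos : (0:ℝ) < m := by exact_mod_cast hm
  have hc : (1 / (m:ℝ)) * m = 1 := by field_simp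
  have h1 : (1 / (m:ℝ)) * f m ≤ (1 / (m:ℝ)) * f a + d := by
    have := mul_le_mul_of_nonneg_left key (le_of_lt (one_div_pos.mpr hmpos))
    nlinarith
  have : d = f a - f (a - 1) := hd
  nlinarith
end

section
/- Let F be a finite set of items with sizes s_i satisfying 0 ≤ s_i ≤ 1/2 for all i ∈ F and Σ_{i∈F} s_i ≤ 1. Then Σ_{i∈F} w(s_i) ≤ 3/2, where w is the Baker–Coffman weight function. (This is the bound on the total w-weight of any bin of an optimal solution that contains no large item.) -/
/-- The sequence `π`: `π 0 = 2` (this is `π_1` of the paper) and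
`π (i+1) = π i · (π i − 1) + 1`, so the values are `2, 3, 7, 43, …`. -/
def bcPi : ℕ → ℕ
  | 0 => 2
  | i + 1 => bcPi i * (bcPi i - 1) + 1

open Classical in
/-- The Baker–Coffman weight function: `w 0 = 0` and, for
`p ∈ (1/(k+1), 1/k]` (so that `k = ⌊1/p⌋`), `w p = 1/k` if `k = π i − 1` for some `i`,
and `w p = ((k+1)/k) · p` otherwise. -/
noncomputable def bcWeight (p : ℝ) : ℝ :=
  if p ≤ 0 then 0
  else if ∃ i : ℕ, bcPi i = ⌊1 / p⌋₊ + 1 then 1 / (⌊1 / p⌋₊ : ℝ)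
  else ((⌊1 / p⌋₊ : ℝ) + 1) / (⌊1 / p⌋₊ : ℝ) * p

lemma bcWeight_le_three_half_mul (p : ℝ) (h0 : 0 ≤ p) (h2 : p ≤ 1 / 2) :
    bcWeight p ≤ 3 / 2 * p := by
  unfold bcWeight
  by_cases hp : p ≤ 0
  · simp [hp]
    nlinarith
  · push_neg at hp
    simp only [if_neg (not_le.mpr hp)]
    have hpinv : (2 : ℝ) ≤ 1 / p := by
      rw [le_div_iff₀ hp]; linarith
    have hk : 2 ≤ ⌊1 / p⌋₊ := Nat.le_floor (by exact_mod_cast hpinv)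
    set k := ⌊1 / p⌋₊ with hkdef
    have hK : (2 : ℝ) ≤ (k : ℝ) := by exact_mod_cast hk
    have hKpos : (0 : ℝ) < k := by linarith
    have hlt : 1 / p < (k : ℝ) + 1 := by
      have := Nat.lt_floor_add_one (1 / p)
      exact_mod_cast this
    have hone : 1 < ((k : ℝ) + 1) * p := by
      rw [div_lt_iff₀ hp] at hlt
      nlinarith
    split_ifs with h
    · rw [div_le_iff₀ hKpos]
      nlinarith
    · rw [div_mul_eq_mul_div, div_le_iff₀ hKpos]
      nlinarith

/-- Any set of items, each of size at most 1/2, fitting into a single bin has total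
Baker–Coffman weight at most 3/2. -/
theorem small_bin_weight_bound {ι : Type*} (F : Finset ι) (s : ι → ℝ)
    (hs : ∀ i ∈ F, 0 ≤ s i ∧ s i ≤ 1 / 2)
    (hsum : ∑ i ∈ F, s i ≤ 1) :
    ∑ i ∈ F, bcWeight (s i) ≤ 3 / 2 := by
  calc ∑ i ∈ F, bcWeight (s i) ≤ ∑ i ∈ F, 3 / 2 * s i := by
        refine Finset.sum_le_sum fun i hi => ?_
        exact bcWeight_le_three_half_mul (s i) (hs i hi).1 (hs i hi).2
    _ = 3 / 2 * ∑ i ∈ F, s i := by rw [Finset.mul_sum]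
    _ ≤ 3 / 2 := by linarith
end

section
/- Let a be an item with size s_a ∈ (1/2, 1], let z be an item with size s_z ∈ [0, 1/2], and let F be a finite set of items with sizes s_i satisfying 0 ≤ s_i ≤ s_z for all i ∈ F. Suppose s_a + s_z + Σ_{i∈F} s_i ≤ 1. Then w(s_a) + w(s_z)/2 + Σ_{i∈F} w(s_i) ≤ 3/2, where w is the Baker–Coffman weight function. (This is the bound on the total weight of any bin of an optimal solution containing a large item, when the weight of the designated small item z_a is halved.) -/
lemma bcWeight_le (p : ℝ) (K : ℕ) (hK : 1 ≤ K) (hp0 : 0 ≤ p) (hp : p * K ≤ 1) :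
    bcWeight p ≤ ((K : ℝ) + 1) / K * p := by
  have hKpos : (0:ℝ) < K := by exact_mod_cast Nat.pos_of_ne_zero (by omega)
  rcases eq_or_lt_of_le hp0 with h | h
  · simp [bcWeight, ← h]
  · have hinv : (K : ℝ) ≤ 1 / p := (le_div_iff₀ h).mpr (by rw [mul_comm]; exact hp)
    have hKk : K ≤ ⌊1/p⌋₊ := Nat.le_floor hinv
    set k := ⌊1/p⌋₊ with hk
    have hk1 : 1 ≤ k := le_trans hK hKk
    have hkpos : (0:ℝ) < k := by exact_mod_cast hk1
    have hlt : 1 / p < (k:ℝ) + 1 := Nat.lt_floor_add_one _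
    have h1 : 1 < ((k:ℝ) + 1) * p := by
      rw [div_lt_iff₀ h] at hlt; linarith
    have hKkR : (K:ℝ) ≤ k := by exact_mod_cast hKk
    have hratio : ((k:ℝ)+1)/k ≤ ((K:ℝ)+1)/K := by
      rw [div_le_div_iff₀ hkpos hKpos]; nlinarith
    have hnp : ¬ p ≤ 0 := not_le.mpr h
    rw [bcWeight, if_neg hnp]
    have hgen : ((k:ℝ) + 1) / k * p ≤ ((K:ℝ)+1)/K * p := by
      exact mul_le_mul_of_nonneg_right hratio hp0
    split
    · refine le_trans ?_ hgen
      rw [div_mul_eq_mul_div, le_div_iff₀ hkpos, div_mul_eq_mul_div,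
        div_le_iff₀ hkpos]
      nlinarith
    · exact hgen

/-- A bin containing a large item `a`, a designated small item `z` (whose weight is
halved) and further items no larger than `z` has total weight at most 3/2. -/
theorem large_bin_weight_bound {ι : Type*} (F : Finset ι) (s : ι → ℝ) (sa sz : ℝ)
    (ha : 1 / 2 < sa) (ha' : sa ≤ 1)
    (hz : 0 ≤ sz) (hz' : sz ≤ 1 / 2)
    (hF : ∀ i ∈ F, 0 ≤ s i ∧ s i ≤ sz)
    (hsum : sa + sz + ∑ i ∈ F, s i ≤ 1) :
    bcWeight sa + bcWeight sz / 2 + ∑ i ∈ F, bcWeight (s i) ≤ 3 / 2 := by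
  have hapos : 0 < sa := by linarith
  have hwa : bcWeight sa = 1 := by
    have hfl : ⌊1/sa⌋₊ = 1 := by
      rw [Nat.floor_eq_iff (by positivity)]
      constructor
      · push_cast; rw [le_div_iff₀ hapos]; linarith
      · push_cast; rw [div_lt_iff₀ hapos]; linarith
    rw [bcWeight, if_neg (not_le.mpr hapos), hfl, if_pos ⟨0, rfl⟩]
    norm_num
  rcases eq_or_lt_of_le hz with hz0 | hz0
  · have hwz : bcWeight sz = 0 := by simp [bcWeight, ← hz0]
    have hws : ∀ i ∈ F, bcWeight (s i) = 0 := by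
      intro i hi
      have := hF i hi
      have : s i = 0 := le_antisymm (by linarith [this.2]) this.1
      simp [bcWeight, this]
    rw [hwa, hwz, Finset.sum_eq_zero hws]; norm_num
  · set K := ⌊1/sz⌋₊ with hKdef
    have h2K : (2:ℝ) ≤ 1/sz := by rw [le_div_iff₀ hz0]; linarith
    have hK2 : 2 ≤ K := Nat.le_floor h2K
    have hKpos : (0:ℝ) < K := by
      have : (2:ℝ) ≤ K := by exact_mod_cast hK2
      linarith
    have hKinv : (K:ℝ) ≤ 1/sz := Nat.floor_le (by positivity)
    have hKle : sz * K ≤ 1 := by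
      rw [mul_comm, ← le_div_iff₀ hz0]; exact hKinv
    have hKlt : 1 < ((K:ℝ)+1) * sz := by
      have := Nat.lt_floor_add_one (1/sz)
      rw [div_lt_iff₀ hz0] at this; linarith
    have hwz : bcWeight sz ≤ ((K:ℝ)+1)/K * sz :=
      bcWeight_le sz K (by omega) hz hKle
    have hws : ∑ i ∈ F, bcWeight (s i) ≤ ∑ i ∈ F, ((K:ℝ)+1)/K * s i := by
      refine Finset.sum_le_sum fun i hi => ?_
      obtain ⟨h1, h2⟩ := hF i hi
      refine bcWeight_le (s i) K (by omega) h1 ?_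
      calc s i * K ≤ sz * K := by nlinarith
        _ ≤ 1 := hKle
    rw [← Finset.mul_sum] at hws
    have hT0 : 0 ≤ ∑ i ∈ F, s i := Finset.sum_nonneg fun i hi => (hF i hi).1
    set T := ∑ i ∈ F, s i
    have hT : sz + T ≤ 1 - sa := by linarith
    rw [hwa]
    have key : ((K:ℝ)+1)/K * sz / 2 + ((K:ℝ)+1)/K * T ≤ 1/2 := by
      rw [div_add' _ _ _ (by norm_num), div_le_div_iff₀ (by norm_num) (by norm_num)]
      have h1 : ((K:ℝ)+1)/K * sz = ((K:ℝ)+1) * sz / K := by ring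
      have hKne : (K:ℝ) ≠ 0 := ne_of_gt hKpos
      field_simp
      nlinarith
    linarith [hwz, hws, key]
end

section
/- The Baker–Coffman weight function w is monotonically non-decreasing on [0,1]: for all 0 ≤ p ≤ q ≤ 1, w(p) ≤ w(q). -/
lemma bcWeight_nonneg (p : ℝ) : 0 ≤ bcWeight p := by
  unfold bcWeight
  split_ifs with h1 h2
  · exact le_refl 0
  · positivity
  · have : 0 < p := lt_of_not_ge h1
    positivity

lemma bcWeight_upper (p : ℝ) (hp : 0 < p) (hp1 : p ≤ 1) :
    bcWeight p ≤ ((⌊1/p⌋₊ : ℝ) + 1) / ((⌊1/p⌋₊ : ℝ) * (⌊1/p⌋₊ : ℝ)) := by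
  have hk1 : 1 ≤ ⌊1/p⌋₊ := Nat.le_floor (by
    rw [le_div_iff₀ hp]; simpa using hp1)
  have hk0 : (0:ℝ) < (⌊1/p⌋₊ : ℝ) := by exact_mod_cast hk1
  have hple : p ≤ 1 / (⌊1/p⌋₊ : ℝ) := by
    rw [le_div_iff₀ hk0]
    have := Nat.floor_le (le_of_lt (one_div_pos.2 hp))
    calc p * (⌊1/p⌋₊ : ℝ) ≤ p * (1/p) := by
          exact mul_le_mul_of_nonneg_left this hp.le
      _ = 1 := by field_simp
  unfold bcWeight
  rw [if_neg (not_le.2 hp)]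
  split_ifs with h2
  · rw [div_le_div_iff₀ hk0 (by positivity)]
    nlinarith
  · calc ((⌊1/p⌋₊ : ℝ) + 1) / (⌊1/p⌋₊ : ℝ) * p
        ≤ ((⌊1/p⌋₊ : ℝ) + 1) / (⌊1/p⌋₊ : ℝ) * (1 / (⌊1/p⌋₊ : ℝ)) := by
          exact mul_le_mul_of_nonneg_left hple (by positivity)
      _ = ((⌊1/p⌋₊ : ℝ) + 1) / ((⌊1/p⌋₊ : ℝ) * (⌊1/p⌋₊ : ℝ)) := by
          field_simp

lemma bcWeight_lower (q : ℝ) (hq : 0 < q) (hq1 : q ≤ 1) :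
    1 / (⌊1/q⌋₊ : ℝ) ≤ bcWeight q := by
  have hk1 : 1 ≤ ⌊1/q⌋₊ := Nat.le_floor (by
    rw [le_div_iff₀ hq]; simpa using hq1)
  have hk0 : (0:ℝ) < (⌊1/q⌋₊ : ℝ) := by exact_mod_cast hk1
  have hqge : 1 / ((⌊1/q⌋₊ : ℝ) + 1) ≤ q := by
    rw [div_le_iff₀ (by positivity)]
    nlinarith [(div_lt_iff₀ hq).1 (Nat.lt_floor_add_one (1/q))]
  unfold bcWeight
  rw [if_neg (not_le.2 hq)]
  split_ifs with h2
  · exact le_refl _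
  · calc (1 : ℝ) / (⌊1/q⌋₊ : ℝ)
        = ((⌊1/q⌋₊ : ℝ) + 1) / (⌊1/q⌋₊ : ℝ) * (1 / ((⌊1/q⌋₊ : ℝ) + 1)) := by
          field_simp
      _ ≤ ((⌊1/q⌋₊ : ℝ) + 1) / (⌊1/q⌋₊ : ℝ) * q := by
          exact mul_le_mul_of_nonneg_left hqge (by positivity)

/-- The Baker–Coffman weight function is monotonically non-decreasing on [0,1]. -/
theorem bcWeight_monotone (p q : ℝ) (hp : 0 ≤ p) (hpq : p ≤ q) (hq : q ≤ 1) :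
    bcWeight p ≤ bcWeight q := by
  rcases le_or_gt p 0 with h0 | h0
  · have : bcWeight p = 0 := by unfold bcWeight; rw [if_pos h0]
    rw [this]; exact bcWeight_nonneg q
  · have hq0 : 0 < q := lt_of_lt_of_le h0 hpq
    have hp1 : p ≤ 1 := le_trans hpq hq
    have hmk : ⌊1/q⌋₊ ≤ ⌊1/p⌋₊ :=
      Nat.floor_mono (one_div_le_one_div_of_le h0 hpq)
    rcases eq_or_lt_of_le hmk with he | hlt
    · -- same bucket
      unfold bcWeight
      rw [if_neg (not_le.2 h0), if_neg (not_le.2 hq0), ← he]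
      have hk1 : 1 ≤ ⌊1/q⌋₊ := Nat.le_floor (by
        rw [le_div_iff₀ hq0]; simpa using hq)
      have hk0 : (0:ℝ) < (⌊1/q⌋₊ : ℝ) := by exact_mod_cast hk1
      split_ifs with h2
      · exact le_refl _
      · exact mul_le_mul_of_nonneg_left hpq (by positivity)
    · -- cross bucket
      have hm1 : 1 ≤ ⌊1/q⌋₊ := Nat.le_floor (by
        rw [le_div_iff₀ hq0]; simpa using hq)
      have hm0 : (0:ℝ) < (⌊1/q⌋₊ : ℝ) := by exact_mod_cast hm1
      have hk0 : (0:ℝ) < (⌊1/p⌋₊ : ℝ) := by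
        exact_mod_cast lt_of_le_of_lt (Nat.zero_le _) hlt
      have hmklt : (⌊1/q⌋₊ : ℝ) + 1 ≤ (⌊1/p⌋₊ : ℝ) := by exact_mod_cast hlt
      calc bcWeight p ≤ ((⌊1/p⌋₊ : ℝ) + 1) / ((⌊1/p⌋₊ : ℝ) * (⌊1/p⌋₊ : ℝ)) :=
            bcWeight_upper p h0 hp1
        _ ≤ 1 / (⌊1/q⌋₊ : ℝ) := by
            rw [div_le_div_iff₀ (by positivity) hm0]
            nlinarith
        _ ≤ bcWeight q := bcWeight_lower q hq0 hq
end

section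
/- For every integer K ≥ 3, consider the GCBP instance consisting of K items of size 1 − 1/K and K² items of size 1/K², with the valid cost function f_K(t) = min(t, K). Then: (i) there is a feasible packing of cost at most 2K (pack all K² small items in one bin and each large item in its own bin); (ii) the packing consisting of K bins, each containing one large item and K small items, is feasible and has cost exactly K². Consequently, a packing in which every bin is completely occupied (the unique optimal packing for classic bin packing on this instance) can have cost at least K/2 times the optimum with respect to f_K, so such packings do not have a finite approximation ratio for GCBP. -/
lemma card_filter_fin {n : ℕ} (p : ℕ → Prop) [DecidablePred p] :
    (Finset.univ.filter (fun i : Fin n => p i.val)).card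
      = ((Finset.range n).filter p).card := by
  rw [Finset.card_filter, Finset.card_filter,
    Fin.sum_univ_eq_sum_range (fun i => if p i then 1 else 0)]

lemma div_eq_iff' {K x b : ℕ} (hK : 0 < K) : x / K = b ↔ b * K ≤ x ∧ x < b * K + K := by
  constructor
  · rintro rfl
    exact ⟨Nat.div_mul_le_self x K, Nat.lt_div_mul_add hK⟩
  · rintro ⟨h1, h2⟩
    have h3 : b ≤ x / K := (Nat.le_div_iff_mul_le hK).2 h1
    have h4 : x / K < b + 1 := (Nat.div_lt_iff_lt_mul hK).2 (by rw [Nat.add_mul, Nat.one_mul]; omega)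
    omega

lemma sum_const_on_filter {n : ℕ} (p : Fin n → Prop) [DecidablePred p]
    (s : Fin n → ℝ) (c : ℝ) (h : ∀ i, p i → s i = c) :
    ∑ i ∈ Finset.univ.filter p, s i = (Finset.univ.filter p).card * c := by
  rw [Finset.sum_congr rfl (fun i hi => h i (Finset.mem_filter.mp hi).2),
    Finset.sum_const, nsmul_eq_mul]

/-- The instance with `K` items of size `1 - 1/K` and `K²` items of size `1/K²`, with
cost function `f_K (t) = min t K`: (i) there is a feasible packing of cost at most `2K`;
(ii) the packing with `K` bins, each containing one large item and `K` small items
(the unique optimal packing for classic bin packing), is feasible and has cost exactly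
`K²`; consequently (iii) the latter packing costs at least `K/2` times the cost of some
feasible packing. -/
theorem full_bins_bad_for_gcbp (K : ℕ) (hK : 3 ≤ K)
    (s : Fin (K + K ^ 2) → ℝ)
    (hs : ∀ i, s i = if (i : ℕ) < K then 1 - 1 / (K : ℝ) else 1 / (K : ℝ) ^ 2)
    (f : ℕ → ℝ) (hf : ∀ t, f t = min (t : ℝ) (K : ℝ)) :
    (∃ P : Fin (K + K ^ 2) → Fin (K + 1),
        packFeasible s P ∧ packCost f P ≤ 2 * K) ∧
    (∃ Q : Fin (K + K ^ 2) → Fin K,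
        (∀ i, (Q i : ℕ) = if (i : ℕ) < K then (i : ℕ) else ((i : ℕ) - K) / K) ∧
        packFeasible s Q ∧ packCost f Q = (K : ℝ) ^ 2) ∧
    (∃ P : Fin (K + K ^ 2) → Fin (K + 1),
        packFeasible s P ∧ ((K : ℝ) / 2) * packCost f P ≤ (K : ℝ) ^ 2) := by
  have hK0 : 0 < K := by omega
  have hKR : (3:ℝ) ≤ (K:ℝ) := by exact_mod_cast hK
  have hK0R : (0:ℝ) < K := by positivity
  have hKn : K ≤ K + K ^ 2 := Nat.le_add_right _ _
  set P : Fin (K + K ^ 2) → Fin (K + 1) := fun i =>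
    if h : (i : ℕ) < K then ⟨i, by omega⟩ else ⟨K, by omega⟩ with hP
  -- characterize P's bins
  have hPsmall : ∀ b : Fin (K + 1), (b : ℕ) < K →
      Finset.univ.filter (fun i => P i = b)
        = Finset.univ.filter (fun i : Fin (K + K ^ 2) => i.val = b.val) := by
    intro b hb
    apply Finset.filter_congr
    intro i _
    simp only [hP, Fin.ext_iff]
    by_cases h : (i : ℕ) < K <;> simp [h] <;> omega
  have hPbig : Finset.univ.filter (fun i => P i = Fin.last K)
      = Finset.univ.filter (fun i : Fin (K + K ^ 2) => K ≤ i.val) := by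
    apply Finset.filter_congr
    intro i _
    simp only [hP, Fin.ext_iff, Fin.val_last]
    by_cases h : (i : ℕ) < K <;> simp [h] <;> omega
  have hcard_small : ∀ b : Fin (K + 1), (b : ℕ) < K →
      (Finset.univ.filter (fun i => P i = b)).card = 1 := by
    intro b hb
    rw [hPsmall b hb, card_filter_fin (fun x => x = b.val), Finset.range_filter_eq]
    rw [if_pos (by omega)]
    simp
  have hcard_big : (Finset.univ.filter (fun i => P i = Fin.last K)).card = K ^ 2 := by
    rw [hPbig, card_filter_fin (fun x => K ≤ x)]
    have : (Finset.range (K + K ^ 2)).filter (fun x => K ≤ x) = Finset.Ico K (K + K ^ 2) := by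
      ext x; simp [Finset.mem_Ico]; omega
    rw [this, Nat.card_Ico]
    omega
  have hPfeas : ∀ b : Fin (K + 1),
      ∑ i ∈ Finset.univ.filter (fun i => P i = b), s i ≤ 1 := by
    intro b
    by_cases hb : (b : ℕ) < K
    · have hval : ∀ i, P i = b → s i = 1 - 1/(K:ℝ) := by
        intro i hi
        have hm : i ∈ Finset.univ.filter (fun i : Fin (K + K ^ 2) => i.val = b.val) := by
          rw [← hPsmall b hb]; exact Finset.mem_filter.mpr ⟨Finset.mem_univ i, hi⟩
        have : i.val = b.val := (Finset.mem_filter.mp hm).2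
        rw [hs i, if_pos (by omega)]
      rw [sum_const_on_filter (fun i => P i = b) s _ hval, hcard_small b hb]
      have : 0 < 1/(K:ℝ) := by positivity
      push_cast
      linarith
    · have hb' : b = Fin.last K := by
        apply Fin.ext; have := b.isLt; simp [Fin.val_last]; omega
      subst hb'
      have hval : ∀ i, P i = Fin.last K → s i = 1/(K:ℝ)^2 := by
        intro i hi
        have hm : i ∈ Finset.univ.filter (fun i : Fin (K + K ^ 2) => K ≤ i.val) := by
          rw [← hPbig]; exact Finset.mem_filter.mpr ⟨Finset.mem_univ i, hi⟩
        have : K ≤ i.val := (Finset.mem_filter.mp hm).2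
        rw [hs i, if_neg (by omega)]
      rw [sum_const_on_filter (fun i => P i = Fin.last K) s _ hval, hcard_big]
      push_cast
      rw [mul_one_div, div_self (by positivity)]
  have hPcost : packCost f P ≤ 2 * K := by
    unfold packCost
    rw [Fin.sum_univ_castSucc]
    have h1 : ∀ b : Fin K,
        f ((Finset.univ.filter (fun i => P i = Fin.castSucc b)).card) = 1 := by
      intro b
      rw [hcard_small _ (by simp [Fin.coe_castSucc, b.isLt]), hf]
      simp
      linarith
    have h2 : f ((Finset.univ.filter (fun i => P i = Fin.last K)).card) = K := by
      rw [hcard_big, hf]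
      push_cast
      rw [min_eq_right (by nlinarith)]
    rw [h2, Finset.sum_congr rfl (fun b _ => h1 b), Finset.sum_const]
    simp
    linarith
  -- the "full bins" packing Q
  have hQbound : ∀ i : Fin (K + K ^ 2), ¬ (i : ℕ) < K → ((i : ℕ) - K) / K < K := by
    intro i h
    rw [Nat.div_lt_iff_lt_mul hK0]
    have h1 := i.isLt
    have h2 : K * K = K ^ 2 := (sq K).symm
    omega
  set Q : Fin (K + K ^ 2) → Fin K := fun i =>
    if h : (i : ℕ) < K then ⟨i, h⟩ else ⟨((i : ℕ) - K) / K, hQbound i h⟩ with hQ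
  have hQspec : ∀ i, (Q i : ℕ) = if (i : ℕ) < K then (i : ℕ) else ((i : ℕ) - K) / K := by
    intro i
    simp only [hQ]
    by_cases h : (i : ℕ) < K <;> simp [h]
  have hQfilt : ∀ b : Fin K, Finset.univ.filter (fun i => Q i = b)
      = Finset.univ.filter (fun i : Fin (K + K ^ 2) => i.val = b.val)
        ∪ Finset.univ.filter (fun i : Fin (K + K ^ 2) =>
            K + b.val * K ≤ i.val ∧ i.val < K + b.val * K + K) := by
    intro b
    rw [← Finset.filter_or]
    apply Finset.filter_congr
    intro i _
    have hb := b.isLt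
    have hi := i.isLt
    rw [Fin.ext_iff, hQspec i]
    obtain ⟨a, ha⟩ : ∃ a, (b : ℕ) * K = a := ⟨_, rfl⟩
    by_cases h : (i : ℕ) < K
    · rw [if_pos h, ha]
      omega
    · rw [if_neg h, div_eq_iff' hK0, ha]
      omega
  have hdisj : ∀ b : Fin K,
      Disjoint (Finset.univ.filter (fun i : Fin (K + K ^ 2) => i.val = b.val))
        (Finset.univ.filter (fun i : Fin (K + K ^ 2) =>
            K + b.val * K ≤ i.val ∧ i.val < K + b.val * K + K)) := by
    intro b
    rw [Finset.disjoint_left]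
    intro i h1 h2
    have h1' := (Finset.mem_filter.mp h1).2
    have h2' := (Finset.mem_filter.mp h2).2
    have hb := b.isLt
    obtain ⟨a, ha⟩ : ∃ a, (b : ℕ) * K = a := ⟨_, rfl⟩
    rw [ha] at h2'
    omega
  have hcard1 : ∀ b : Fin K,
      (Finset.univ.filter (fun i : Fin (K + K ^ 2) => i.val = b.val)).card = 1 := by
    intro b
    rw [card_filter_fin (fun x => x = b.val), Finset.range_filter_eq,
      if_pos (by have := b.isLt; omega)]
    simp
  have hble : ∀ b : Fin K, K + (b : ℕ) * K + K ≤ K + K ^ 2 := by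
    intro b
    have hb : (b : ℕ) + 1 ≤ K := b.isLt
    have h1 : ((b : ℕ) + 1) * K ≤ K * K := Nat.mul_le_mul_right K hb
    have h2 : K * K = K ^ 2 := (sq K).symm
    rw [Nat.add_mul, Nat.one_mul] at h1
    omega
  have hcard2 : ∀ b : Fin K,
      (Finset.univ.filter (fun i : Fin (K + K ^ 2) =>
          K + b.val * K ≤ i.val ∧ i.val < K + b.val * K + K)).card = K := by
    intro b
    rw [card_filter_fin (fun x => K + b.val * K ≤ x ∧ x < K + b.val * K + K)]
    have hle := hble b
    obtain ⟨a, ha⟩ : ∃ a, (b : ℕ) * K = a := ⟨_, rfl⟩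
    rw [ha] at hle
    have he : (Finset.range (K + K ^ 2)).filter
        (fun x => K + b.val * K ≤ x ∧ x < K + b.val * K + K)
        = Finset.Ico (K + b.val * K) (K + b.val * K + K) := by
      ext x
      simp only [Finset.mem_filter, Finset.mem_range, Finset.mem_Ico, ha]
      omega
    rw [he, Nat.card_Ico, ha]
    omega
  have hQfeas : packFeasible s Q := by
    intro b
    have hval1 : ∀ i : Fin (K + K ^ 2), i.val = b.val → s i = 1 - 1/(K:ℝ) := by
      intro i hi
      rw [hs i, if_pos (by have := b.isLt; omega)]
    have hval2 : ∀ i : Fin (K + K ^ 2),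
        K + b.val * K ≤ i.val ∧ i.val < K + b.val * K + K → s i = 1/(K:ℝ)^2 := by
      intro i hi
      rw [hs i, if_neg (by
        have := Nat.le_trans (Nat.le_add_right K _) hi.1
        omega)]
    rw [hQfilt b, Finset.sum_union (hdisj b),
      sum_const_on_filter _ s _ hval1, sum_const_on_filter _ s _ hval2,
      hcard1 b, hcard2 b]
    have : (1:ℝ) * (1 - 1/(K:ℝ)) + (K:ℝ) * (1/(K:ℝ)^2) = 1 := by
      field_simp
      ring
    push_cast
    linarith
  have hQcard : ∀ b : Fin K, (Finset.univ.filter (fun i => Q i = b)).card = K + 1 := by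
    intro b
    rw [hQfilt b, Finset.card_union_of_disjoint (hdisj b), hcard1 b, hcard2 b]
    omega
  have hQcost : packCost f Q = (K:ℝ) ^ 2 := by
    unfold packCost
    have hfb : ∀ b : Fin K, f ((Finset.univ.filter (fun i => Q i = b)).card) = K := by
      intro b
      rw [hQcard b, hf]
      push_cast
      rw [min_eq_right (by linarith)]
    rw [Finset.sum_congr rfl (fun b _ => hfb b), Finset.sum_const]
    simp [Finset.card_univ, nsmul_eq_mul]
    ring
  refine ⟨⟨P, hPfeas, hPcost⟩, ⟨Q, hQspec, hQfeas, hQcost⟩, ⟨P, hPfeas, ?_⟩⟩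
  have h := mul_le_mul_of_nonneg_left hPcost (by positivity : (0:ℝ) ≤ (K:ℝ)/2)
  calc (K:ℝ)/2 * packCost f P ≤ (K:ℝ)/2 * (2*K) := h
    _ = (K:ℝ)^2 := by ring
end

section
/- For every integer K ≥ 3, consider the GCBP instance consisting of K items of size 1/K and K items of size 1 − 1/K, with the valid cost function f_2(t) = min(t, 2). Then: (i) there is a feasible packing of cost at most K + 2 (all small items in one bin, each large item alone in a bin); (ii) for every integer r ≥ 0, every feasible packing in which at least r of the items of size 1 − 1/K share their bin with at least one other item has cost at least K + r. Consequently, any algorithm that matches an α-fraction of the large items with small items on this instance has cost at least (1+α)K, yielding an approximation ratio of at least (1+α)·K/(K+2). -/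
lemma card_filter_val_lt (n K : ℕ) (h : K ≤ n) :
    (Finset.univ.filter (fun i : Fin n => (i : ℕ) < K)).card = K := by
  conv_rhs => rw [← Finset.card_range K]
  exact Finset.card_bij' (fun a _ => (a : ℕ))
    (fun b hb => (⟨b, lt_of_lt_of_le (Finset.mem_range.mp hb) h⟩ : Fin n))
    (by intro a ha; simpa using (Finset.mem_filter.mp ha).2)
    (by intro b hb; simpa using Finset.mem_range.mp hb)
    (by intro a ha; rfl) (by intro b hb; rfl)


lemma core_lower_bound (K : ℕ) (hK : 3 ≤ K)
    (s : Fin (2 * K) → ℝ)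
    (hs : ∀ i, s i = if (i : ℕ) < K then 1 / (K : ℝ) else 1 - 1 / (K : ℝ))
    (f : ℕ → ℝ) (hf : ∀ t, f t = min (t : ℝ) 2)
    (m : ℕ) (Q : Fin (2 * K) → Fin m) (hQ : packFeasible s Q) :
    (K : ℝ) + ((Finset.univ.filter (fun i : Fin (2 * K) =>
        K ≤ (i : ℕ) ∧ ∃ j, j ≠ i ∧ Q j = Q i)).card : ℝ) ≤ packCost f Q := by
  have hK0 : (0:ℝ) < K := by exact_mod_cast (by omega : 0 < K)
  have hK3 : (3:ℝ) ≤ K := by exact_mod_cast hK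
  have hdiv : 1 / (K:ℝ) ≤ 1 / 3 := one_div_le_one_div_of_le (by norm_num) hK3
  have hdiv0 : 0 < 1 / (K:ℝ) := by positivity
  have hs0 : ∀ i, 0 ≤ s i := by
    intro i; rw [hs]; split
    · positivity
    · linarith
  have hlarge : ∀ i : Fin (2*K), K ≤ (i:ℕ) → s i = 1 - 1/(K:ℝ) := by
    intro i hi; rw [hs, if_neg (by omega)]
  set L := Finset.univ.filter (fun i : Fin (2*K) => K ≤ (i:ℕ)) with hL
  set S := Finset.univ.filter (fun i : Fin (2*K) =>
      K ≤ (i : ℕ) ∧ ∃ j, j ≠ i ∧ Q j = Q i) with hS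
  have hSL : S ⊆ L := by
    intro i hi
    simp only [hS, hL, Finset.mem_filter] at *
    tauto
  have hLcard : L.card = K := by
    have h1 := Finset.card_filter_add_card_filter_not
      (s := (Finset.univ : Finset (Fin (2*K)))) (p := fun i : Fin (2*K) => (i:ℕ) < K)
    have h2 : (Finset.univ.filter (fun i : Fin (2*K) => ¬ (i:ℕ) < K)) = L := by
      apply Finset.filter_congr; intro i _; simp [not_lt]
    rw [card_filter_val_lt (2*K) K (by omega), h2] at h1
    simp only [Finset.card_univ, Fintype.card_fin] at h1
    omega
  have hinj : ∀ i ∈ L, ∀ j ∈ L, Q i = Q j → i = j := by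
    intro i hi j hj hij
    by_contra hne
    have hiK : K ≤ (i:ℕ) := by simpa [hL] using hi
    have hjK : K ≤ (j:ℕ) := by simpa [hL] using hj
    have hsub : ({i, j} : Finset (Fin (2*K))) ⊆
        Finset.univ.filter (fun k => Q k = Q i) := by
      intro k hk
      simp only [Finset.mem_insert, Finset.mem_singleton] at hk
      rcases hk with rfl | rfl <;> simp [hij]
    have hsum := Finset.sum_le_sum_of_subset_of_nonneg hsub
      (fun k _ _ => hs0 k)
    rw [Finset.sum_insert (by simpa using hne), Finset.sum_singleton] at hsum
    have hfe := hQ (Q i)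
    rw [hlarge i hiK, hlarge j hjK] at hsum
    linarith
  -- cost lower bound
  have hcost : ∑ i ∈ L, f ((Finset.univ.filter (fun k => Q k = Q i)).card)
      ≤ packCost f Q := by
    have heq := Finset.sum_image (s := L) (g := Q)
      (f := fun b => f ((Finset.univ.filter (fun k => Q k = b)).card)) hinj
    rw [packCost, ← heq]
    apply Finset.sum_le_sum_of_subset_of_nonneg (Finset.subset_univ _)
    intro b _ _
    rw [hf]
    exact le_min (by positivity) (by norm_num)
  have hsplit := Finset.sum_sdiff (f := fun i : Fin (2*K) =>
      f ((Finset.univ.filter (fun k => Q k = Q i)).card)) hSL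
  have hSsum : 2 * (S.card : ℝ) ≤ ∑ i ∈ S, f ((Finset.univ.filter (fun k => Q k = Q i)).card) := by
    calc 2 * (S.card : ℝ) = ∑ _i ∈ S, (2:ℝ) := by rw [Finset.sum_const, nsmul_eq_mul]; ring
      _ ≤ _ := by
        apply Finset.sum_le_sum
        intro i hi
        simp only [hS, Finset.mem_filter] at hi
        obtain ⟨_, _, j, hji, hQj⟩ := hi
        have hsub : ({j, i} : Finset (Fin (2*K))) ⊆
            Finset.univ.filter (fun k => Q k = Q i) := by
          intro k hk
          simp only [Finset.mem_insert, Finset.mem_singleton] at hk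
          rcases hk with rfl | rfl <;> simp [hQj]
        have h2 : 2 ≤ (Finset.univ.filter (fun k => Q k = Q i)).card := by
          have := Finset.card_le_card hsub
          rwa [Finset.card_insert_of_notMem (by simpa using hji), Finset.card_singleton] at this
        rw [hf]
        exact le_min (by exact_mod_cast h2) le_rfl
  have hLSsum : ((L \ S).card : ℝ) ≤ ∑ i ∈ L \ S, f ((Finset.univ.filter (fun k => Q k = Q i)).card) := by
    calc ((L \ S).card : ℝ) = ∑ _i ∈ L \ S, (1:ℝ) := by rw [Finset.sum_const, nsmul_eq_mul]; ring
      _ ≤ _ := by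
        apply Finset.sum_le_sum
        intro i _
        have h1 : 1 ≤ (Finset.univ.filter (fun k => Q k = Q i)).card :=
          Finset.card_pos.mpr ⟨i, by simp⟩
        rw [hf]
        exact le_min (by exact_mod_cast h1) (by norm_num)
  have hcardSK : S.card ≤ K := by have := Finset.card_le_card hSL; omega
  have hLS : ((L \ S).card : ℝ) = (K : ℝ) - S.card := by
    rw [Finset.card_sdiff_of_subset hSL, hLcard]
    push_cast [Nat.cast_sub hcardSK]
    ring
  rw [hLS] at hLSsum
  linarith [hsplit ▸ add_le_add hLSsum hSsum]

lemma good_packing (K : ℕ) (hK : 3 ≤ K)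
    (s : Fin (2 * K) → ℝ)
    (hs : ∀ i, s i = if (i : ℕ) < K then 1 / (K : ℝ) else 1 - 1 / (K : ℝ))
    (f : ℕ → ℝ) (hf : ∀ t, f t = min (t : ℝ) 2) :
    ∃ P : Fin (2 * K) → Fin (K + 1),
        packFeasible s P ∧ packCost f P ≤ (K : ℝ) + 2 := by
  have hK0 : (0:ℝ) < K := by exact_mod_cast (by omega : 0 < K)
  have hdiv0 : 0 < 1 / (K:ℝ) := by positivity
  set P : Fin (2*K) → Fin (K+1) := fun i => if h : (i : ℕ) < K then 0
    else ⟨(i : ℕ) - K + 1, by have := i.isLt; omega⟩ with hP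
  -- bin 0
  have hbin0 : Finset.univ.filter (fun i => P i = 0) =
      Finset.univ.filter (fun i : Fin (2*K) => (i : ℕ) < K) := by
    apply Finset.filter_congr
    intro i _
    by_cases h : (i : ℕ) < K
    · simp [hP, h]
    · simp only [hP, dif_neg h, Fin.ext_iff, Fin.val_zero]
      constructor
      · intro hc; omega
      · intro hc; omega
  have hcard0 : (Finset.univ.filter (fun i => P i = 0)).card = K := by
    rw [hbin0, card_filter_val_lt (2*K) K (by omega)]
  -- other bins are singletons
  have hbinb : ∀ b : Fin (K+1), (b : ℕ) ≠ 0 →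
      Finset.univ.filter (fun i => P i = b) =
        {(⟨K + (b : ℕ) - 1, by have := b.isLt; omega⟩ : Fin (2*K))} := by
    intro b hb
    ext i
    have hiLt := i.isLt
    have hbLt := b.isLt
    simp only [Finset.mem_filter, Finset.mem_univ, true_and, Finset.mem_singleton,
      Fin.ext_iff]
    by_cases h : (i : ℕ) < K
    · simp only [hP, dif_pos h, Fin.val_zero]
      constructor
      · intro hc; omega
      · intro hc; omega
    · simp only [hP, dif_neg h]
      constructor
      · intro hc; omega
      · intro hc; omega
  refine ⟨P, ?_, ?_⟩
  · -- feasibility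
    intro b
    by_cases hb : (b : ℕ) = 0
    · have hb0 : b = 0 := Fin.ext hb
      rw [hb0]
      have : ∑ i ∈ Finset.univ.filter (fun i => P i = 0), s i
          = ∑ i ∈ Finset.univ.filter (fun i => P i = 0), (1 / (K:ℝ)) := by
        apply Finset.sum_congr rfl
        intro i hi
        rw [hbin0] at hi
        rw [hs, if_pos (Finset.mem_filter.mp hi).2]
      rw [this, Finset.sum_const, hcard0, nsmul_eq_mul]
      rw [mul_one_div, div_self (ne_of_gt hK0)]
    · rw [hbinb b hb, Finset.sum_singleton, hs, if_neg (by simp; omega)]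
      linarith
  · -- cost
    rw [packCost, Fin.sum_univ_succ]
    have h0 : f ((Finset.univ.filter (fun i => P i = 0)).card) = 2 := by
      rw [hcard0, hf]
      have : (2:ℝ) ≤ K := by linarith [show (3:ℝ) ≤ K from by exact_mod_cast hK]
      rw [min_eq_right this]
    have h1 : ∀ j : Fin K, f ((Finset.univ.filter (fun i => P i = j.succ)).card) = 1 := by
      intro j
      rw [hbinb j.succ (by simp [Fin.val_succ]), Finset.card_singleton, hf]
      norm_num
    rw [h0]
    rw [Finset.sum_congr rfl (fun j _ => h1 j), Finset.sum_const, nsmul_eq_mul]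
    simp only [Finset.card_univ, Fintype.card_fin]
    linarith

/-- The instance with `K` items of size `1/K` and `K` items of size `1 - 1/K`, with
cost function `f_2 (t) = min t 2`: (i) there is a feasible packing of cost at most
`K + 2`; (ii) every feasible packing in which at least `r` of the large items share
their bin with another item has cost at least `K + r`; consequently (iii) every
feasible packing matching (at least) an `α`-fraction of the large items with other
items has cost at least `(1 + α) · K`. -/
theorem matching_fraction_lower_bound (K : ℕ) (hK : 3 ≤ K)
    (s : Fin (2 * K) → ℝ)
    (hs : ∀ i, s i = if (i : ℕ) < K then 1 / (K : ℝ) else 1 - 1 / (K : ℝ))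
    (f : ℕ → ℝ) (hf : ∀ t, f t = min (t : ℝ) 2) :
    (∃ P : Fin (2 * K) → Fin (K + 1),
        packFeasible s P ∧ packCost f P ≤ (K : ℝ) + 2) ∧
    (∀ (r : ℕ) (m : ℕ) (Q : Fin (2 * K) → Fin m), packFeasible s Q →
        r ≤ (Finset.univ.filter (fun i : Fin (2 * K) =>
              K ≤ (i : ℕ) ∧ ∃ j, j ≠ i ∧ Q j = Q i)).card →
        (K : ℝ) + r ≤ packCost f Q) ∧
    (∀ (α : ℝ), 0 ≤ α → ∀ (m : ℕ) (Q : Fin (2 * K) → Fin m), packFeasible s Q →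
        α * K ≤ (Finset.univ.filter (fun i : Fin (2 * K) =>
              K ≤ (i : ℕ) ∧ ∃ j, j ≠ i ∧ Q j = Q i)).card →
        (1 + α) * K ≤ packCost f Q) := by
  refine ⟨good_packing K hK s hs f hf, ?_, ?_⟩
  · intro r m Q hQ hr
    have h := core_lower_bound K hK s hs f hf m Q hQ
    have hr' : (r : ℝ) ≤ ((Finset.univ.filter (fun i : Fin (2 * K) =>
        K ≤ (i : ℕ) ∧ ∃ j, j ≠ i ∧ Q j = Q i)).card : ℝ) := by exact_mod_cast hr
    linarith
  · intro α hα m Q hQ hαK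
    have h := core_lower_bound K hK s hs f hf m Q hQ
    linarith
end
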